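/- arXiv:2402.08332 — 4 statements merged into one kernel-verified Lean document; each statement's English description precedes it below -/
import Mathlib

section
/- If G is a graph, I = {a1, a2, a3} is an independent set of size 3 in G, and C is a connected component of G − I such that every vertex of I has a neighbor in C, then G[N[C]] contains an induced subgraph H belonging to the class S ∪ T ∪ M whose set of extremities is exactly I. -/
open SimpleGraph

universe u v

section Defs

variable {V : Type u}

/-- An induced minor model of `H` in `G`. -/
def InducedMinorModel {W : Type v} (H : SimpleGraph W) (G : SimpleGraph V)
    (X : W → Set V) : Prop :=
  (∀ w, (X w).Nonempty) ∧ (∀ w, (G.induce (X w)).Connected) ∧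
  (Pairwise fun w w' => Disjoint (X w) (X w')) ∧
  (Pairwise fun w w' => ((∃ x ∈ X w, ∃ y ∈ X w', G.Adj x y) ↔ H.Adj w w'))

/-- `G` contains `H` as an induced minor. -/
def HasInducedMinor {W : Type v} (H : SimpleGraph W) (G : SimpleGraph V) : Prop :=
  ∃ X : W → Set V, InducedMinorModel H G X

/-- The complete bipartite graph `K_{2,3}`. -/
def K23 : SimpleGraph (Fin 2 ⊕ Fin 3) := completeBipartiteGraph (Fin 2) (Fin 3)

/-- `G` (as a whole graph) is a long prism. -/
def IsLongPrism (G : SimpleGraph V) : Prop :=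
  ∃ (a₁ a₂ a₃ b₁ b₂ b₃ : V) (P₁ : G.Walk a₁ b₁) (P₂ : G.Walk a₂ b₂) (P₃ : G.Walk a₃ b₃),
    P₁.IsPath ∧ P₂.IsPath ∧ P₃.IsPath ∧
    1 ≤ P₁.length ∧ 1 ≤ P₂.length ∧ 1 ≤ P₃.length ∧
    (2 ≤ P₁.length ∨ 2 ≤ P₂.length ∨ 2 ≤ P₃.length) ∧
    (∀ x : V, x ∈ P₁.support ∨ x ∈ P₂.support ∨ x ∈ P₃.support) ∧
    (∀ x : V, x ∈ P₁.support → x ∉ P₂.support) ∧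
    (∀ x : V, x ∈ P₁.support → x ∉ P₃.support) ∧
    (∀ x : V, x ∈ P₂.support → x ∉ P₃.support) ∧
    (∀ x y : V, G.Adj x y ↔ (s(x, y) ∈ P₁.edges ∨ s(x, y) ∈ P₂.edges ∨ s(x, y) ∈ P₃.edges ∨
      s(x, y) ∈ ({s(a₁, a₂), s(a₂, a₃), s(a₁, a₃), s(b₁, b₂), s(b₂, b₃), s(b₁, b₃)} :
        Set (Sym2 V))))

/-- `G` (as a whole graph) is a pyramid. -/
def IsPyramid (G : SimpleGraph V) : Prop :=
  ∃ (a b₁ b₂ b₃ : V) (P₁ : G.Walk a b₁) (P₂ : G.Walk a b₂) (P₃ : G.Walk a b₃),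
    P₁.IsPath ∧ P₂.IsPath ∧ P₃.IsPath ∧
    1 ≤ P₁.length ∧ 1 ≤ P₂.length ∧ 1 ≤ P₃.length ∧
    ((2 ≤ P₁.length ∧ 2 ≤ P₂.length) ∨ (2 ≤ P₁.length ∧ 2 ≤ P₃.length) ∨
      (2 ≤ P₂.length ∧ 2 ≤ P₃.length)) ∧
    (∀ x : V, x ∈ P₁.support ∨ x ∈ P₂.support ∨ x ∈ P₃.support) ∧
    (∀ x : V, x ∈ P₁.support → x ∈ P₂.support → x = a) ∧
    (∀ x : V, x ∈ P₁.support → x ∈ P₃.support → x = a) ∧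
    (∀ x : V, x ∈ P₂.support → x ∈ P₃.support → x = a) ∧
    (∀ x y : V, G.Adj x y ↔ (s(x, y) ∈ P₁.edges ∨ s(x, y) ∈ P₂.edges ∨ s(x, y) ∈ P₃.edges ∨
      s(x, y) ∈ ({s(b₁, b₂), s(b₂, b₃), s(b₁, b₃)} : Set (Sym2 V))))

/-- `G` (as a whole graph) is a theta. -/
def IsTheta (G : SimpleGraph V) : Prop :=
  ∃ (a b : V) (P₁ : G.Walk a b) (P₂ : G.Walk a b) (P₃ : G.Walk a b),
    P₁.IsPath ∧ P₂.IsPath ∧ P₃.IsPath ∧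
    2 ≤ P₁.length ∧ 2 ≤ P₂.length ∧ 2 ≤ P₃.length ∧
    (∀ x : V, x ∈ P₁.support ∨ x ∈ P₂.support ∨ x ∈ P₃.support) ∧
    (∀ x : V, x ∈ P₁.support → x ∈ P₂.support → x = a ∨ x = b) ∧
    (∀ x : V, x ∈ P₁.support → x ∈ P₃.support → x = a ∨ x = b) ∧
    (∀ x : V, x ∈ P₂.support → x ∈ P₃.support → x = a ∨ x = b) ∧
    (∀ x y : V, G.Adj x y ↔ (s(x, y) ∈ P₁.edges ∨ s(x, y) ∈ P₂.edges ∨ s(x, y) ∈ P₃.edges))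

/-- `G` (as a whole graph) is the cube. -/
def IsCube (G : SimpleGraph V) : Prop :=
  ∃ v₁ v₂ v₃ v₄ v₅ v₆ x y : V,
    [v₁, v₂, v₃, v₄, v₅, v₆, x, y].Nodup ∧
    (∀ u : V, u ∈ [v₁, v₂, v₃, v₄, v₅, v₆, x, y]) ∧
    (∀ u w : V, G.Adj u w ↔
      s(u, w) ∈ ({s(v₁, v₂), s(v₂, v₃), s(v₃, v₄), s(v₄, v₅), s(v₅, v₆), s(v₆, v₁),
        s(x, v₁), s(x, v₃), s(x, v₅), s(y, v₂), s(y, v₄), s(y, v₆)} : Set (Sym2 V)))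

/-- `Q` is a sector of the wheel with rim `C` and center `x`. -/
def IsSectorOf (G : SimpleGraph V) (x : V) {w : V} (C : G.Walk w w)
    {p q : V} (Q : G.Walk p q) : Prop :=
  Q.IsPath ∧ 1 ≤ Q.length ∧ (∀ e ∈ Q.edges, e ∈ C.edges) ∧ G.Adj x p ∧ G.Adj x q ∧
  (∀ u ∈ Q.support, u ≠ p → u ≠ q → ¬ G.Adj x u)

/-- The closed walk `C` together with the vertex `x` form a wheel in `G`,
i.e. `C` is a hole (a chordless cycle of length at least 4) and `x` has at least
three neighbors on `C`. -/
def IsWheelWith (G : SimpleGraph V) (x : V) {w : V} (C : G.Walk w w) : Prop :=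
  C.IsCycle ∧ 4 ≤ C.length ∧ x ∉ C.support ∧
  (∀ y z : V, y ∈ C.support → z ∈ C.support → (G.Adj y z ↔ s(y, z) ∈ C.edges)) ∧
  (∃ n₁ n₂ n₃ : V, n₁ ∈ C.support ∧ n₂ ∈ C.support ∧ n₃ ∈ C.support ∧
    n₁ ≠ n₂ ∧ n₁ ≠ n₃ ∧ n₂ ≠ n₃ ∧ G.Adj x n₁ ∧ G.Adj x n₂ ∧ G.Adj x n₃)

/-- `G` (as a whole graph) is a broken wheel: a wheel at least two of whose
sectors have length at least 2. -/
def IsBrokenWheel (G : SimpleGraph V) : Prop :=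
  ∃ (x w : V) (C : G.Walk w w), IsWheelWith G x C ∧
    (∀ u : V, u = x ∨ u ∈ C.support) ∧
    ∃ (p₁ q₁ p₂ q₂ : V) (Q₁ : G.Walk p₁ q₁) (Q₂ : G.Walk p₂ q₂),
      IsSectorOf G x C Q₁ ∧ IsSectorOf G x C Q₂ ∧
      2 ≤ Q₁.length ∧ 2 ≤ Q₂.length ∧ (∀ e ∈ Q₁.edges, e ∉ Q₂.edges)

/-- `G` (as a whole graph) belongs to the class `S` (subdivisions of `K_{1,3}`),
with extremities `e₁`, `e₂`, `e₃`. -/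
def IsS (G : SimpleGraph V) (e₁ e₂ e₃ : V) : Prop :=
  ∃ (u : V) (P₁ : G.Walk u e₁) (P₂ : G.Walk u e₂) (P₃ : G.Walk u e₃),
    P₁.IsPath ∧ P₂.IsPath ∧ P₃.IsPath ∧
    1 ≤ P₁.length ∧ 1 ≤ P₂.length ∧ 1 ≤ P₃.length ∧
    (∀ x : V, x ∈ P₁.support ∨ x ∈ P₂.support ∨ x ∈ P₃.support) ∧
    (∀ x : V, x ∈ P₁.support → x ∈ P₂.support → x = u) ∧
    (∀ x : V, x ∈ P₁.support → x ∈ P₃.support → x = u) ∧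
    (∀ x : V, x ∈ P₂.support → x ∈ P₃.support → x = u) ∧
    (∀ x y : V, G.Adj x y ↔ (s(x, y) ∈ P₁.edges ∨ s(x, y) ∈ P₂.edges ∨ s(x, y) ∈ P₃.edges))

/-- `G` (as a whole graph) belongs to the class `T`, with extremities `e₁`, `e₂`, `e₃`. -/
def IsT (G : SimpleGraph V) (e₁ e₂ e₃ : V) : Prop :=
  ∃ (t₁ t₂ t₃ : V) (P₁ : G.Walk t₁ e₁) (P₂ : G.Walk t₂ e₂) (P₃ : G.Walk t₃ e₃),
    P₁.IsPath ∧ P₂.IsPath ∧ P₃.IsPath ∧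
    1 ≤ P₁.length ∧ 1 ≤ P₂.length ∧ 1 ≤ P₃.length ∧
    (∀ x : V, x ∈ P₁.support ∨ x ∈ P₂.support ∨ x ∈ P₃.support) ∧
    (∀ x : V, x ∈ P₁.support → x ∉ P₂.support) ∧
    (∀ x : V, x ∈ P₁.support → x ∉ P₃.support) ∧
    (∀ x : V, x ∈ P₂.support → x ∉ P₃.support) ∧
    (∀ x y : V, G.Adj x y ↔ (s(x, y) ∈ P₁.edges ∨ s(x, y) ∈ P₂.edges ∨ s(x, y) ∈ P₃.edges ∨
      s(x, y) ∈ ({s(t₁, t₂), s(t₂, t₃), s(t₁, t₃)} : Set (Sym2 V))))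

/-- `G` (as a whole graph) belongs to the class `M`, with extremities the two
endpoints `e₁`, `e₂` of the path and the center `e₃`. -/
def IsM (G : SimpleGraph V) (e₁ e₂ e₃ : V) : Prop :=
  ∃ P : G.Walk e₁ e₂,
    P.IsPath ∧ e₃ ∉ P.support ∧
    (∀ x : V, x = e₃ ∨ x ∈ P.support) ∧
    (∀ x y : V, x ∈ P.support → y ∈ P.support → (G.Adj x y ↔ s(x, y) ∈ P.edges)) ∧
    ¬ G.Adj e₃ e₁ ∧ ¬ G.Adj e₃ e₂ ∧
    (∃ u w : V, u ∈ P.support ∧ w ∈ P.support ∧ u ≠ w ∧ G.Adj e₃ u ∧ G.Adj e₃ w)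

/-- `G` belongs to `S ∪ T ∪ M` and its set of extremities is exactly `I`. -/
def IsSTMwithExtremities (G : SimpleGraph V) (I : Set V) : Prop :=
  ∃ e₁ e₂ e₃ : V, I = {e₁, e₂, e₃} ∧
    (IsS G e₁ e₂ e₃ ∨ IsT G e₁ e₂ e₃ ∨ IsM G e₁ e₂ e₃)

/-- The interior of a path (its support minus the two endpoints). -/
def walkInterior {G : SimpleGraph V} {p q : V} (W : G.Walk p q) : Set V :=
  {v | v ∈ W.support ∧ v ≠ p ∧ v ≠ q}

/-- A broken wheel in `G` together with a frame: the rim is the concatenation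
`P ++ Q ++ R ++ S` where `P = a…b` and `R = c…d` are sectors of length at least 2
(`a`, `b`, `c`, `d` in clockwise order). -/
structure BWFrame (G : SimpleGraph V) where
  x : V
  a : V
  b : V
  c : V
  d : V
  P : G.Walk a b
  Q : G.Walk b c
  R : G.Walk c d
  S : G.Walk d a
  hP : 2 ≤ P.length
  hR : 2 ≤ R.length
  nondeg : ¬ (b = c ∧ d = a)
  cyc : (((P.append Q).append R).append S).IsCycle
  len4 : 4 ≤ (((P.append Q).append R).append S).length
  hx : x ∉ (((P.append Q).append R).append S).support
  chordless : ∀ y z : V, y ∈ (((P.append Q).append R).append S).support →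
    z ∈ (((P.append Q).append R).append S).support →
    (G.Adj y z ↔ s(y, z) ∈ (((P.append Q).append R).append S).edges)
  adja : G.Adj x a
  adjb : G.Adj x b
  adjc : G.Adj x c
  adjd : G.Adj x d
  secP : ∀ u ∈ P.support, u ≠ a → u ≠ b → ¬ G.Adj x u
  secR : ∀ u ∈ R.support, u ≠ c → u ≠ d → ¬ G.Adj x u

/-- The rim of a framed broken wheel. -/
def BWFrame.rim {G : SimpleGraph V} (F : BWFrame G) : G.Walk F.a F.a :=
  ((F.P.append F.Q).append F.R).append F.S

/-- The vertex set of a framed broken wheel. -/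
def BWFrame.verts {G : SimpleGraph V} (F : BWFrame G) : Set V :=
  insert F.x {v | v ∈ F.rim.support}

/-- Optimality of a framed broken wheel `(W, F)`: no broken wheel of `G` has fewer
vertices, and subject to that the sum of the lengths of `Q` and `S` is minimal. -/
def BWFrame.Optimal {G : SimpleGraph V} (F : BWFrame G) : Prop :=
  (∀ T : Set V, IsBrokenWheel (G.induce T) → F.verts.ncard ≤ T.ncard) ∧
  (∀ F' : BWFrame G, F'.verts.ncard = F.verts.ncard →
    F.Q.length + F.S.length ≤ F'.Q.length + F'.S.length)

/-- `S` separates `u` and `v` in `G`: both avoid `S` and every walk between them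
meets `S`. -/
def Separates (G : SimpleGraph V) (S : Set V) (u v : V) : Prop :=
  u ∉ S ∧ v ∉ S ∧ ∀ p : G.Walk u v, ∃ w ∈ p.support, w ∈ S

/-- `S` is a minimal separator of `G`: a minimal `u,v`-separator for some `u`, `v`. -/
def IsMinimalSeparator (G : SimpleGraph V) (S : Set V) : Prop :=
  ∃ u v : V, Separates G S u v ∧ ∀ T ⊆ S, Separates G T u v → T = S

/-- `A` is an independent set of `G`. -/
def IsIndepSet (G : SimpleGraph V) (A : Set V) : Prop :=
  ∀ x ∈ A, ∀ y ∈ A, x ≠ y → ¬ G.Adj x y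

end Defs

/-!
Take a chordless path `P` from `a₁` to `a₂` with interior in `C`. If `a₃` sees `P`, then `a₃` is
an apex over a chordless path, and a vertex off a chordless path, nonadjacent to its ends, forms
with it a graph in `S` (one neighbour) or `M` (several). Otherwise let `R` be a shortest path from
`a₃` through `C \ P` to a vertex `q` with a neighbour in the interior of `P`. If neither `a₁` nor
`a₂` sees `R`, then `P ∪ R` is in `S` or `T`, depending on the neighbours of `q` on `P`. If only
`a₂` sees `R`, it is an apex over the chordless path `a₃ - R - q - P - a₁`; if both do, one of them
is an apex over the initial segment of `R` that ends at the first neighbour of the other.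
-/

namespace SimpleGraph

namespace Walk

variable {V : Type*} {G : SimpleGraph V}

lemma exists_eq_append_of_first {u v : V} (p : G.Walk u v) (P : V → Prop)
    (h : ∃ x ∈ p.support, P x) :
    ∃ (c : V) (q : G.Walk u c) (r : G.Walk c v),
      p = q.append r ∧ P c ∧ ∀ x ∈ q.support, P x → x = c := by
  induction p with
  | nil => exact ⟨_, nil, nil, rfl, by simpa using h, by simp⟩
  | @cons a b c hab p ih =>
    by_cases ha : P a
    · exact ⟨a, nil, cons hab p, rfl, ha, by simp⟩
    · obtain ⟨d, q, r, rfl, hd, hq⟩ := ih (by simpa [ha] using h)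
      refine ⟨d, cons hab q, r, rfl, hd, ?_⟩
      rintro x hx hPx
      rcases (mem_support_iff _).1 hx with rfl | hx
      · exact absurd hPx ha
      · exact hq x (by simpa using hx) hPx

lemma exists_eq_append_append_of_first_last {u v : V} (p : G.Walk u v) (P : V → Prop)
    (h : ∃ x ∈ p.support, P x) :
    ∃ (c d : V) (A : G.Walk u c) (M : G.Walk c d) (E : G.Walk d v),
      p = A.append (M.append E) ∧ P c ∧ P d ∧ (∀ x ∈ A.support, P x → x = c) ∧
        ∀ x ∈ E.support, P x → x = d := by
  obtain ⟨c, A, B, rfl, hc, hA⟩ := p.exists_eq_append_of_first P h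
  obtain ⟨d, E, M, hB, hd, hE⟩ := B.reverse.exists_eq_append_of_first P ⟨c, by simp, hc⟩
  refine ⟨c, d, A, M.reverse, E.reverse, ?_, hc, hd, hA, by simpa using hE⟩
  rw [← reverse_append, ← hB, reverse_reverse]

lemma exists_walk_to_adj_of_not_mem {a b : V} (p : G.Walk a b) (T : Set V) (ha : a ∉ T)
    (hb : b ∈ T) :
    ∃ (x y : V) (q : G.Walk a x), G.Adj x y ∧ y ∈ T ∧ y ∈ p.support ∧
      ∀ v ∈ q.support, v ∈ p.support ∧ v ∉ T := by
  induction p with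
  | nil => exact absurd hb ha
  | @cons a a' b h p ih =>
    by_cases ha' : a' ∈ T
    · exact ⟨a, a', nil, h, ha', by simp, by simpa using ha⟩
    · obtain ⟨x, y, q, hxy, hy, hyp, hq⟩ := ih ha' hb
      refine ⟨x, y, cons h q, hxy, hy, by simp [hyp], ?_⟩
      intro v hv
      rcases (mem_support_iff _).1 hv with rfl | hv
      · simpa using ha
      · exact ⟨by simp [(hq v hv).1], (hq v hv).2⟩

lemma one_le_length_of_ne {u v : V} {p : G.Walk u v} (h : u ≠ v) : 1 ≤ p.length :=
  not_nil_iff_lt_length.1 (not_nil_of_ne h)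

lemma IsPath.eq_of_mem_of_mem_append {u v w x : V} {p : G.Walk u v} {q : G.Walk v w}
    (h : (p.append q).IsPath) (hp : x ∈ p.support) (hq : x ∈ q.support) : x = v := by
  by_contra hx
  exact h.ne_of_mem_support_of_append hx hp hq rfl

lemma IsPath.append {u v w : V} {p : G.Walk u v} {q : G.Walk v w} (hp : p.IsPath)
    (hq : q.IsPath) (h : ∀ x ∈ p.support, x ∈ q.support → x = v) : (p.append q).IsPath := by
  rw [isPath_def, support_append, List.nodup_append]
  refine ⟨hp.support_nodup, hq.support_nodup.sublist (List.tail_sublist _), ?_⟩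
  rintro x hx _ hx' rfl
  have hq' := hq.support_nodup
  rw [← cons_tail_support, List.nodup_cons] at hq'
  exact hq'.1 (h x hx (List.mem_of_mem_tail hx') ▸ hx')

lemma IsChordless.reverse {u v : V} {p : G.Walk u v} (h : p.IsChordless) :
    p.reverse.IsChordless := by
  rw [isChordless_iff_forall_mem_edges] at h ⊢
  simpa using h

lemma IsChordless.of_append_left {u v w : V} {p : G.Walk u v} {q : G.Walk v w}
    (h : (p.append q).IsChordless) (hpath : (p.append q).IsPath) : p.IsChordless := by
  rw [isChordless_iff_forall_mem_edges]
  intro x y hx hy hxy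
  rcases List.mem_append.1 (edges_append p q ▸ h.mem_edges (by simp [hx]) (by simp [hy]) hxy)
    with he | he
  · exact he
  · have := hpath.eq_of_mem_of_mem_append hx (q.fst_mem_support_of_mem_edges he)
    have := hpath.eq_of_mem_of_mem_append hy (q.snd_mem_support_of_mem_edges he)
    exact absurd (by simp_all) hxy.ne

lemma IsChordless.of_append_right {u v w : V} {p : G.Walk u v} {q : G.Walk v w}
    (h : (p.append q).IsChordless) (hpath : (p.append q).IsPath) : q.IsChordless := by
  have h' : (q.reverse.append p.reverse).IsChordless := by
    simpa [← reverse_append] using h.reverse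
  have hpath' : (q.reverse.append p.reverse).IsPath := by
    simpa [← reverse_append] using hpath.reverse
  simpa using (h'.of_append_left hpath').reverse

lemma IsChordless.eq_of_adj_append {u v w x y : V} {p : G.Walk u v} {q : G.Walk v w}
    (h : (p.append q).IsChordless) (hpath : (p.append q).IsPath) (hx : x ∈ p.support)
    (hy : y ∈ q.support) (hxy : G.Adj x y) : x = v ∨ y = v := by
  rcases List.mem_append.1 (edges_append p q ▸ h.mem_edges (by simp [hx]) (by simp [hy]) hxy)
    with he | he
  · exact Or.inr (hpath.eq_of_mem_of_mem_append (p.snd_mem_support_of_mem_edges he) hy)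
  · exact Or.inl (hpath.eq_of_mem_of_mem_append hx (q.fst_mem_support_of_mem_edges he))

lemma IsChordless.append {u v w : V} {p : G.Walk u v} {q : G.Walk v w} (hp : p.IsChordless)
    (hq : q.IsChordless) (h : ∀ x ∈ p.support, ∀ y ∈ q.support, G.Adj x y → x = v ∨ y = v) :
    (p.append q).IsChordless := by
  have key : ∀ x ∈ p.support, ∀ y ∈ q.support, G.Adj x y → s(x, y) ∈ (p.append q).edges := by
    intro x hx y hy hxy
    rw [edges_append, List.mem_append]
    rcases h x hx y hy hxy with rfl | rfl
    · exact Or.inr (hq.mem_edges q.start_mem_support hy hxy)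
    · exact Or.inl (hp.mem_edges hx p.end_mem_support hxy)
  rw [isChordless_iff_forall_mem_edges]
  intro x y hx hy hxy
  rw [mem_support_append_iff] at hx hy
  rcases hx with hx | hx <;> rcases hy with hy | hy
  · simp [hp.mem_edges hx hy hxy]
  · exact key x hx y hy hxy
  · simpa [Sym2.eq_swap] using key y hy x hx hxy.symm
  · simp [hq.mem_edges hx hy hxy]

lemma IsChordless.cons {u v w : V} {p : G.Walk v w} (huv : G.Adj u v) (hp : p.IsChordless)
    (h : ∀ y ∈ p.support, G.Adj u y → y = v) : (cons huv p).IsChordless := by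
  rw [← cons_nil_append]
  refine huv.isChordless_toWalk.append hp fun x hx y hy hxy => ?_
  rcases (by simpa using hx : x = u ∨ x = v) with rfl | rfl
  · exact Or.inr (h y hy hxy)
  · exact Or.inl rfl

lemma IsChordless.adj_append_append {x c d y a e : V} {A : G.Walk x c} {M : G.Walk c d}
    {E : G.Walk d y} (h : (A.append (M.append E)).IsChordless)
    (hpath : (A.append (M.append E)).IsPath) (hcd : c ≠ d) (ha : a ∈ A.support)
    (he : e ∈ E.support) : a ≠ e ∧ (G.Adj a e → a = c ∧ e = d) := by
  have he' : e ∈ (M.append E).support := by simp [he]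
  have hME := hpath.of_append_right
  have hcE : c ∉ E.support := fun h => hcd (hME.eq_of_mem_of_mem_append M.start_mem_support h)
  refine ⟨?_, fun hae => ?_⟩
  · rintro rfl
    exact hcE (hpath.eq_of_mem_of_mem_append ha he' ▸ he)
  rcases h.eq_of_adj_append hpath ha he' hae with rfl | rfl
  · exact ⟨rfl, ((h.of_append_right hpath).eq_of_adj_append hME M.start_mem_support he
      hae).resolve_left hcd⟩
  · exact absurd he hcE

lemma isChordless_nil {u : V} : (nil : G.Walk u u).IsChordless := by
  rw [isChordless_iff_forall_mem_edges]
  simp +contextual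

lemma IsChordless.concat {u v w : V} {p : G.Walk u v} (hvw : G.Adj v w) (hp : p.IsChordless)
    (h : ∀ x ∈ p.support, G.Adj x w → x = v) : (p.concat hvw).IsChordless := by
  rw [concat_eq_append]
  refine hp.append hvw.isChordless_toWalk fun x hx y hy hxy => ?_
  rcases (by simpa using hy : y = v ∨ y = w) with rfl | rfl
  · exact Or.inr rfl
  · exact Or.inl (h x hx hxy)

section Induce

variable {s : Set V} {u v : V} (p : G.Walk u v) (hp : ∀ x ∈ p.support, x ∈ s)

lemma mem_support_induce_iff (x : s) : x ∈ (p.induce s hp).support ↔ (x : V) ∈ p.support := by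
  simp

lemma mk_mem_edges_induce_iff (x y : s) :
    s(x, y) ∈ (p.induce s hp).edges ↔ s((x : V), (y : V)) ∈ p.edges := by
  induction p with
  | nil => simp
  | cons h p ih => simp [ih, Subtype.ext_iff]

lemma isPath_induce_iff : (p.induce s hp).IsPath ↔ p.IsPath := by
  rw [isPath_def, isPath_def, support_induce]
  conv_rhs => rw [← List.attachWith_map_subtype_val hp]
  exact (List.nodup_map_iff Subtype.val_injective).symm

lemma length_induce : (p.induce s hp).length = p.length := by
  induction p with
  | nil => rfl
  | cons h p ih => simp [ih]

end Induce

section Shortest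

variable {a v : V} {S A : Set V} (p : G.Walk a v)

lemma isChordless_of_forall_length_le (hpS : ∀ x ∈ p.support, x ∈ S)
    (hmin : ∀ w ∈ A, ∀ q : G.Walk a w, (∀ x ∈ q.support, x ∈ S) → p.length ≤ q.length)
    (hv : v ∈ A) : p.IsChordless := by
  have hshortcut : ∀ i j, i < j → j ≤ p.length → G.Adj (p.getVert i) (p.getVert j) →
      s(p.getVert i, p.getVert j) ∈ p.edges := by
    intro i j hij hj hadj
    by_contra hne
    have hj' : j ≠ i + 1 := by
      rintro rfl
      exact hne ((mk_mem_edges_iff_exists p).2 ⟨i, by omega, rfl⟩)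
    have hshort := hmin v hv ((p.take i).append (cons hadj (p.drop j))) (by
      intro x hx
      rw [mem_support_append_iff, support_cons, List.mem_cons, support_take,
        drop_support_eq_support_drop_min] at hx
      rcases hx with hx | rfl | hx
      · exact hpS x (List.take_subset _ _ hx)
      · exact hpS _ (p.getVert_mem_support _)
      · exact hpS x (List.drop_subset _ _ hx))
    simp only [length_append, take_length, length_cons, drop_length] at hshort
    omega
  rw [isChordless_iff_forall_mem_edges]
  intro x y hx hy hxy
  obtain ⟨i, rfl, hi⟩ := mem_support_iff_exists_getVert.1 hx
  obtain ⟨j, rfl, hj⟩ := mem_support_iff_exists_getVert.1 hy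
  rcases lt_trichotomy i j with h | rfl | h
  · exact hshortcut i j h hj hxy
  · exact absurd rfl hxy.ne
  · rw [Sym2.eq_swap]
    exact hshortcut j i h hi hxy.symm

lemma eq_of_mem_of_forall_length_le (hpS : ∀ x ∈ p.support, x ∈ S)
    (hmin : ∀ w ∈ A, ∀ q : G.Walk a w, (∀ x ∈ q.support, x ∈ S) → p.length ≤ q.length) {x : V}
    (hx : x ∈ p.support) (hxA : x ∈ A) : x = v := by
  obtain ⟨i, rfl, hi⟩ := mem_support_iff_exists_getVert.1 hx
  by_contra hne
  have hi' : i < p.length := lt_of_le_of_ne hi (by rintro rfl; exact hne (getVert_length p))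
  have hshort := hmin _ hxA (p.take i) fun x hx =>
    hpS x (List.take_subset _ _ (support_take p i ▸ hx))
  simp only [take_length] at hshort
  omega

end Shortest

lemma exists_isPath_isChordless_to_set {a : V} {S A : Set V}
    (h : ∃ v ∈ A, ∃ p : G.Walk a v, ∀ x ∈ p.support, x ∈ S) :
    ∃ v ∈ A, ∃ p : G.Walk a v, (∀ x ∈ p.support, x ∈ S) ∧ p.IsPath ∧ p.IsChordless ∧
      ∀ x ∈ p.support, x ∈ A → x = v := by
  classical
  have hex : ∃ n, ∃ v ∈ A, ∃ p : G.Walk a v, (∀ x ∈ p.support, x ∈ S) ∧ p.length = n := by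
    obtain ⟨v, hv, p, hp⟩ := h
    exact ⟨_, v, hv, p, hp, rfl⟩
  obtain ⟨v, hv, p, hpS, hp⟩ := Nat.find_spec hex
  have hbS : ∀ x ∈ p.bypass.support, x ∈ S := fun x hx =>
    hpS x (p.support_bypass_subset_support hx)
  have hmin : ∀ w ∈ A, ∀ q : G.Walk a w, (∀ x ∈ q.support, x ∈ S) →
      p.bypass.length ≤ q.length :=
    fun w hw q hq => p.length_bypass_le_length.trans (hp ▸ Nat.find_min' hex ⟨w, hw, q, hq, rfl⟩)
  exact ⟨v, hv, p.bypass, hbS, p.bypass_isPath, isChordless_of_forall_length_le _ hbS hmin hv,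
    fun x hx => eq_of_mem_of_forall_length_le _ hbS hmin hx⟩

end Walk

variable {V : Type*} {G : SimpleGraph V} {C : Set V}

open Walk

def closedNbhd (G : SimpleGraph V) (C : Set V) : Set V := C ∪ {w | ∃ u ∈ C, G.Adj u w}

def HasSTMIn (G : SimpleGraph V) (C I : Set V) : Prop :=
  ∃ S ⊆ closedNbhd G C, I ⊆ S ∧ IsSTMwithExtremities (G.induce S) {v : S | (v : V) ∈ I}

lemma hasSTMIn_of_induce {S : Set V} {e₁ e₂ e₃ : V} (hS : S ⊆ closedNbhd G C) (h₁ : e₁ ∈ S)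
    (h₂ : e₂ ∈ S) (h₃ : e₃ ∈ S)
    (h : IsS (G.induce S) ⟨e₁, h₁⟩ ⟨e₂, h₂⟩ ⟨e₃, h₃⟩ ∨ IsT (G.induce S) ⟨e₁, h₁⟩ ⟨e₂, h₂⟩ ⟨e₃, h₃⟩ ∨
      IsM (G.induce S) ⟨e₁, h₁⟩ ⟨e₂, h₂⟩ ⟨e₃, h₃⟩) :
    HasSTMIn G C {e₁, e₂, e₃} := by
  refine ⟨S, hS, by simp [Set.insert_subset_iff, h₁, h₂, h₃], _, _, _, ?_, h⟩
  ext v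
  simp [Subtype.ext_iff]

lemma mem_edges_of_adj_of_legs {u v w x y : V} {P : G.Walk u v} {Q : G.Walk u w}
    (hP : P.IsChordless) (hQ : Q.IsChordless)
    (h : ∀ x ∈ P.support, ∀ y ∈ Q.support, x ≠ u → y ≠ u → x ≠ y ∧ ¬ G.Adj x y)
    (hx : x ∈ P.support) (hy : y ∈ Q.support) (hxy : G.Adj x y) :
    s(x, y) ∈ P.edges ∨ s(x, y) ∈ Q.edges := by
  by_cases hxu : x = u
  · subst hxu
    exact Or.inr (hQ.mem_edges Q.start_mem_support hy hxy)
  by_cases hyu : y = u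
  · subst hyu
    exact Or.inl (hP.mem_edges hx P.start_mem_support hxy)
  exact absurd hxy (h x hx y hy hxu hyu).2

lemma isS_induce_union {u e₁ e₂ e₃ : V} (P₁ : G.Walk u e₁) (P₂ : G.Walk u e₂)
    (P₃ : G.Walk u e₃) (hp₁ : P₁.IsPath) (hp₂ : P₂.IsPath) (hp₃ : P₃.IsPath)
    (hu₁ : u ≠ e₁) (hu₂ : u ≠ e₂) (hu₃ : u ≠ e₃)
    (h₁₂ : ∀ x ∈ P₁.support, x ∈ P₂.support → x = u)
    (h₁₃ : ∀ x ∈ P₁.support, x ∈ P₃.support → x = u)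
    (h₂₃ : ∀ x ∈ P₂.support, x ∈ P₃.support → x = u)
    (closed : ∀ x y, x ∈ P₁.support ∨ x ∈ P₂.support ∨ x ∈ P₃.support →
      y ∈ P₁.support ∨ y ∈ P₂.support ∨ y ∈ P₃.support → G.Adj x y →
      s(x, y) ∈ P₁.edges ∨ s(x, y) ∈ P₂.edges ∨ s(x, y) ∈ P₃.edges) :
    let S := {x | x ∈ P₁.support ∨ x ∈ P₂.support ∨ x ∈ P₃.support}
    IsS (G.induce S) ⟨e₁, Or.inl P₁.end_mem_support⟩ ⟨e₂, Or.inr (Or.inl P₂.end_mem_support)⟩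
      ⟨e₃, Or.inr (Or.inr P₃.end_mem_support)⟩ := by
  intro S
  have hS₁ : ∀ x ∈ P₁.support, x ∈ S := fun x hx => Or.inl hx
  have hS₂ : ∀ x ∈ P₂.support, x ∈ S := fun x hx => Or.inr (Or.inl hx)
  have hS₃ : ∀ x ∈ P₃.support, x ∈ S := fun x hx => Or.inr (Or.inr hx)
  refine ⟨⟨u, hS₁ u P₁.start_mem_support⟩, P₁.induce S hS₁, P₂.induce S hS₂, P₃.induce S hS₃,
    (isPath_induce_iff _ _).2 hp₁, (isPath_induce_iff _ _).2 hp₂, (isPath_induce_iff _ _).2 hp₃,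
    (length_induce _ _).symm ▸ one_le_length_of_ne hu₁,
    (length_induce _ _).symm ▸ one_le_length_of_ne hu₂,
    (length_induce _ _).symm ▸ one_le_length_of_ne hu₃, fun x => ?_, fun x => ?_,
    fun x => ?_, fun x => ?_, fun x y => ?_⟩ <;>
    simp only [mem_support_induce_iff, comap_adj, Function.Embedding.subtype_apply,
      mk_mem_edges_induce_iff, Subtype.ext_iff]
  · exact x.2
  · exact h₁₂ x
  · exact h₁₃ x
  · exact h₂₃ x
  · exact ⟨closed x y x.2 y.2, fun h => by rcases h with h | h | h <;> exact adj_of_mem_edges _ h⟩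

lemma hasSTMIn_of_claw {u e₁ e₂ e₃ : V} (P₁ : G.Walk u e₁) (P₂ : G.Walk u e₂)
    (P₃ : G.Walk u e₃) (hp₁ : P₁.IsPath) (hp₂ : P₂.IsPath) (hp₃ : P₃.IsPath)
    (hc₁ : P₁.IsChordless) (hc₂ : P₂.IsChordless) (hc₃ : P₃.IsChordless)
    (hu₁ : u ≠ e₁) (hu₂ : u ≠ e₂) (hu₃ : u ≠ e₃)
    (h₁₂ : ∀ x ∈ P₁.support, ∀ y ∈ P₂.support, x ≠ u → y ≠ u → x ≠ y ∧ ¬ G.Adj x y)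
    (h₁₃ : ∀ x ∈ P₁.support, ∀ y ∈ P₃.support, x ≠ u → y ≠ u → x ≠ y ∧ ¬ G.Adj x y)
    (h₂₃ : ∀ x ∈ P₂.support, ∀ y ∈ P₃.support, x ≠ u → y ≠ u → x ≠ y ∧ ¬ G.Adj x y)
    (hN : ∀ x, x ∈ P₁.support ∨ x ∈ P₂.support ∨ x ∈ P₃.support → x ∈ closedNbhd G C) :
    HasSTMIn G C {e₁, e₂, e₃} := by
  have meet : ∀ {w w'} {P : G.Walk u w} {Q : G.Walk u w'},
      (∀ x ∈ P.support, ∀ y ∈ Q.support, x ≠ u → y ≠ u → x ≠ y ∧ ¬ G.Adj x y) →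
      ∀ x ∈ P.support, x ∈ Q.support → x = u := fun h x hx hx' => by
    by_contra hxu
    exact (h x hx x hx' hxu hxu).1 rfl
  have swap : ∀ {w w'} {P : G.Walk u w} {Q : G.Walk u w'},
      (∀ x ∈ P.support, ∀ y ∈ Q.support, x ≠ u → y ≠ u → x ≠ y ∧ ¬ G.Adj x y) →
      ∀ x ∈ Q.support, ∀ y ∈ P.support, x ≠ u → y ≠ u → x ≠ y ∧ ¬ G.Adj x y :=
    fun h x hx y hy hxu hyu => ⟨(h y hy x hx hyu hxu).1.symm, fun hxy =>
      (h y hy x hx hyu hxu).2 hxy.symm⟩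
  refine hasSTMIn_of_induce hN _ _ _ (Or.inl (isS_induce_union P₁ P₂ P₃ hp₁ hp₂ hp₃ hu₁ hu₂ hu₃
    (meet h₁₂) (meet h₁₃) (meet h₂₃) ?_))
  rintro x y (hx | hx | hx) (hy | hy | hy) hxy
  · exact Or.inl (hc₁.mem_edges hx hy hxy)
  · rcases mem_edges_of_adj_of_legs hc₁ hc₂ h₁₂ hx hy hxy with h | h <;> simp [h]
  · rcases mem_edges_of_adj_of_legs hc₁ hc₃ h₁₃ hx hy hxy with h | h <;> simp [h]
  · rcases mem_edges_of_adj_of_legs hc₂ hc₁ (swap h₁₂) hx hy hxy with h | h <;> simp [h]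
  · exact Or.inr (Or.inl (hc₂.mem_edges hx hy hxy))
  · rcases mem_edges_of_adj_of_legs hc₂ hc₃ h₂₃ hx hy hxy with h | h <;> simp [h]
  · rcases mem_edges_of_adj_of_legs hc₃ hc₁ (swap h₁₃) hx hy hxy with h | h <;> simp [h]
  · rcases mem_edges_of_adj_of_legs hc₃ hc₂ (swap h₂₃) hx hy hxy with h | h <;> simp [h]
  · exact Or.inr (Or.inr (hc₃.mem_edges hx hy hxy))

lemma isT_induce_union {t₁ t₂ t₃ e₁ e₂ e₃ : V} (P₁ : G.Walk t₁ e₁) (P₂ : G.Walk t₂ e₂)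
    (P₃ : G.Walk t₃ e₃) (hp₁ : P₁.IsPath) (hp₂ : P₂.IsPath) (hp₃ : P₃.IsPath)
    (ht₁ : t₁ ≠ e₁) (ht₂ : t₂ ≠ e₂) (ht₃ : t₃ ≠ e₃)
    (a₁₂ : G.Adj t₁ t₂) (a₁₃ : G.Adj t₁ t₃) (a₂₃ : G.Adj t₂ t₃)
    (h₁₂ : ∀ x ∈ P₁.support, x ∉ P₂.support) (h₁₃ : ∀ x ∈ P₁.support, x ∉ P₃.support)
    (h₂₃ : ∀ x ∈ P₂.support, x ∉ P₃.support)
    (closed : ∀ x y, x ∈ P₁.support ∨ x ∈ P₂.support ∨ x ∈ P₃.support →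
      y ∈ P₁.support ∨ y ∈ P₂.support ∨ y ∈ P₃.support → G.Adj x y →
      s(x, y) ∈ P₁.edges ∨ s(x, y) ∈ P₂.edges ∨ s(x, y) ∈ P₃.edges ∨
        s(x, y) = s(t₁, t₂) ∨ s(x, y) = s(t₂, t₃) ∨ s(x, y) = s(t₁, t₃)) :
    let S := {x | x ∈ P₁.support ∨ x ∈ P₂.support ∨ x ∈ P₃.support}
    IsT (G.induce S) ⟨e₁, Or.inl P₁.end_mem_support⟩ ⟨e₂, Or.inr (Or.inl P₂.end_mem_support)⟩
      ⟨e₃, Or.inr (Or.inr P₃.end_mem_support)⟩ := by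
  intro S
  have hS₁ : ∀ x ∈ P₁.support, x ∈ S := fun x hx => Or.inl hx
  have hS₂ : ∀ x ∈ P₂.support, x ∈ S := fun x hx => Or.inr (Or.inl hx)
  have hS₃ : ∀ x ∈ P₃.support, x ∈ S := fun x hx => Or.inr (Or.inr hx)
  refine ⟨⟨t₁, hS₁ _ P₁.start_mem_support⟩, ⟨t₂, hS₂ _ P₂.start_mem_support⟩,
    ⟨t₃, hS₃ _ P₃.start_mem_support⟩, P₁.induce S hS₁, P₂.induce S hS₂, P₃.induce S hS₃,
    (isPath_induce_iff _ _).2 hp₁, (isPath_induce_iff _ _).2 hp₂, (isPath_induce_iff _ _).2 hp₃,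
    (length_induce _ _).symm ▸ one_le_length_of_ne ht₁,
    (length_induce _ _).symm ▸ one_le_length_of_ne ht₂,
    (length_induce _ _).symm ▸ one_le_length_of_ne ht₃, fun x => ?_, fun x => ?_,
    fun x => ?_, fun x => ?_, fun x y => ?_⟩ <;>
    simp only [mem_support_induce_iff, comap_adj, Function.Embedding.subtype_apply,
      mk_mem_edges_induce_iff, Set.mem_insert_iff, Set.mem_singleton_iff, Sym2.eq_iff,
      Subtype.ext_iff]
  · exact x.2
  · exact h₁₂ x
  · exact h₁₃ x
  · exact h₂₃ x
  constructor
  · intro hxy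
    have := closed x y x.2 y.2 hxy
    simp only [Sym2.eq_iff] at this
    tauto
  · rintro (h | h | h | (⟨h, h'⟩ | ⟨h, h'⟩) | (⟨h, h'⟩ | ⟨h, h'⟩) | (⟨h, h'⟩ | ⟨h, h'⟩))
    any_goals exact adj_of_mem_edges _ h
    all_goals rw [h, h']
    exacts [a₁₂, a₁₂.symm, a₂₃, a₂₃.symm, a₁₃, a₁₃.symm]

lemma hasSTMIn_of_triangle {t₁ t₂ t₃ e₁ e₂ e₃ : V} (P₁ : G.Walk t₁ e₁) (P₂ : G.Walk t₂ e₂)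
    (P₃ : G.Walk t₃ e₃) (hp₁ : P₁.IsPath) (hp₂ : P₂.IsPath) (hp₃ : P₃.IsPath)
    (hc₁ : P₁.IsChordless) (hc₂ : P₂.IsChordless) (hc₃ : P₃.IsChordless)
    (ht₁ : t₁ ≠ e₁) (ht₂ : t₂ ≠ e₂) (ht₃ : t₃ ≠ e₃)
    (a₁₂ : G.Adj t₁ t₂) (a₁₃ : G.Adj t₁ t₃) (a₂₃ : G.Adj t₂ t₃)
    (h₁₂ : ∀ x ∈ P₁.support, ∀ y ∈ P₂.support, x ≠ y ∧ (G.Adj x y → x = t₁ ∧ y = t₂))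
    (h₁₃ : ∀ x ∈ P₁.support, ∀ y ∈ P₃.support, x ≠ y ∧ (G.Adj x y → x = t₁ ∧ y = t₃))
    (h₂₃ : ∀ x ∈ P₂.support, ∀ y ∈ P₃.support, x ≠ y ∧ (G.Adj x y → x = t₂ ∧ y = t₃))
    (hN : ∀ x, x ∈ P₁.support ∨ x ∈ P₂.support ∨ x ∈ P₃.support → x ∈ closedNbhd G C) :
    HasSTMIn G C {e₁, e₂, e₃} := by
  refine hasSTMIn_of_induce hN _ _ _ (Or.inr (Or.inl (isT_induce_union P₁ P₂ P₃ hp₁ hp₂ hp₃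
    ht₁ ht₂ ht₃ a₁₂ a₁₃ a₂₃ (fun x hx hx' => (h₁₂ x hx x hx').1 rfl)
    (fun x hx hx' => (h₁₃ x hx x hx').1 rfl) (fun x hx hx' => (h₂₃ x hx x hx').1 rfl) ?_)))
  rintro x y (hx | hx | hx) (hy | hy | hy) hxy
  · exact Or.inl (hc₁.mem_edges hx hy hxy)
  · obtain ⟨rfl, rfl⟩ := (h₁₂ x hx y hy).2 hxy
    simp
  · obtain ⟨rfl, rfl⟩ := (h₁₃ x hx y hy).2 hxy
    simp
  · obtain ⟨rfl, rfl⟩ := (h₁₂ y hy x hx).2 hxy.symm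
    simp [Sym2.eq_swap]
  · exact Or.inr (Or.inl (hc₂.mem_edges hx hy hxy))
  · obtain ⟨rfl, rfl⟩ := (h₂₃ x hx y hy).2 hxy
    simp
  · obtain ⟨rfl, rfl⟩ := (h₁₃ y hy x hx).2 hxy.symm
    simp [Sym2.eq_swap]
  · obtain ⟨rfl, rfl⟩ := (h₂₃ y hy x hx).2 hxy.symm
    simp [Sym2.eq_swap]
  · exact Or.inr (Or.inr (Or.inl (hc₃.mem_edges hx hy hxy)))

lemma hasSTMIn_of_center {e₁ e₂ e₃ : V} (P : G.Walk e₁ e₂) (hp : P.IsPath)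
    (hc : P.IsChordless) (he₃ : e₃ ∉ P.support) (h₁ : ¬ G.Adj e₃ e₁) (h₂ : ¬ G.Adj e₃ e₂)
    (hnbr : ∃ u ∈ P.support, ∃ w ∈ P.support, u ≠ w ∧ G.Adj e₃ u ∧ G.Adj e₃ w)
    (hN : ∀ x, x ∈ P.support ∨ x = e₃ → x ∈ closedNbhd G C) :
    HasSTMIn G C {e₁, e₂, e₃} := by
  set S : Set V := {x | x ∈ P.support ∨ x = e₃}
  have hS : ∀ x ∈ P.support, x ∈ S := fun x hx => Or.inl hx
  obtain ⟨u, hu, w, hw, huw, hu₃, hw₃⟩ := hnbr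
  refine hasSTMIn_of_induce (fun x hx => hN x hx) (hS _ P.start_mem_support)
    (hS _ P.end_mem_support) (Or.inr rfl) (Or.inr (Or.inr
    ⟨P.induce S hS, (isPath_induce_iff _ _).2 hp, ?_, ?_, ?_, h₁, h₂,
      ⟨u, hS u hu⟩, ⟨w, hS w hw⟩, ?_, ?_, fun h => huw (congrArg Subtype.val h), hu₃, hw₃⟩))
  · rw [mem_support_induce_iff]
    exact he₃
  · rintro ⟨x, hx | rfl⟩
    · exact Or.inr ((mem_support_induce_iff _ _ _).2 hx)
    · exact Or.inl rfl
  · rintro ⟨x, hx⟩ ⟨y, hy⟩ hx' hy'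
    rw [mem_support_induce_iff] at hx' hy'
    rw [mk_mem_edges_induce_iff]
    exact ⟨hc.mem_edges hx' hy', adj_of_mem_edges _⟩
  · exact (mem_support_induce_iff _ _ _).2 hu
  · exact (mem_support_induce_iff _ _ _).2 hw

lemma hasSTMIn_of_leg_at_vertex {x y z u q : V} (A : G.Walk x u) (E : G.Walk u y)
    (R : G.Walk z q) (hA : A.IsPath) (hE : E.IsPath) (hR : R.IsPath) (hAc : A.IsChordless)
    (hEc : E.IsChordless) (hRc : R.IsChordless)
    (hAE : ∀ a ∈ A.support, ∀ e ∈ E.support, a ≠ u → e ≠ u → a ≠ e ∧ ¬ G.Adj a e)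
    (hRA : ∀ a ∈ A.support, ∀ r ∈ R.support, a ≠ r ∧ (G.Adj a r → a = u ∧ r = q))
    (hRE : ∀ e ∈ E.support, ∀ r ∈ R.support, e ≠ r ∧ (G.Adj e r → e = u ∧ r = q))
    (hqu : G.Adj q u) (hux : u ≠ x) (huy : u ≠ y)
    (hN : ∀ v, v ∈ A.support ∨ v ∈ E.support ∨ v ∈ R.support → v ∈ closedNbhd G C) :
    HasSTMIn G C {x, y, z} := by
  have hRu : ∀ r ∈ R.support, u ≠ r := fun r hr => (hRA u A.end_mem_support r hr).1
  refine hasSTMIn_of_claw A.reverse E (cons hqu.symm R.reverse) hA.reverse hE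
    ((cons_isPath_iff _ _).2 ⟨hR.reverse, by simpa using fun h => hRu u h rfl⟩) hAc.reverse
    hEc (hRc.reverse.cons hqu.symm fun r hr h => ((hRA u A.end_mem_support r
      (by simpa using hr)).2 h).2) hux huy (hRu z R.start_mem_support) ?_ ?_ ?_ ?_
  · intro a ha e he hau heu
    rw [support_reverse, List.mem_reverse] at ha
    exact hAE a ha e he hau heu
  · intro a ha r hr hau hru
    simp only [support_reverse, List.mem_reverse, support_cons, List.mem_cons] at ha hr
    have hr := hr.resolve_left hru
    exact ⟨(hRA a ha r hr).1, fun h => hau ((hRA a ha r hr).2 h).1⟩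
  · intro e he r hr heu hru
    simp only [support_reverse, List.mem_reverse, support_cons, List.mem_cons] at hr
    have hr := hr.resolve_left hru
    exact ⟨(hRE e he r hr).1, fun h => heu ((hRE e he r hr).2 h).1⟩
  · intro v hv
    simp only [support_reverse, List.mem_reverse, support_cons, List.mem_cons] at hv
    rcases hv with hv | hv | rfl | hv
    exacts [hN v (Or.inl hv), hN v (Or.inr (Or.inl hv)), hN v (Or.inl A.end_mem_support),
      hN v (Or.inr (Or.inr hv))]

lemma hasSTMIn_of_leg_at_attachment {x y z u₁ u₂ q : V} (A : G.Walk x u₁) (E : G.Walk u₂ y)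
    (R : G.Walk z q) (hA : A.IsPath) (hE : E.IsPath) (hR : R.IsPath) (hAc : A.IsChordless)
    (hEc : E.IsChordless) (hRc : R.IsChordless)
    (hAE : ∀ a ∈ A.support, ∀ e ∈ E.support, a ≠ e ∧ ¬ G.Adj a e)
    (hRA : ∀ a ∈ A.support, ∀ r ∈ R.support, a ≠ r ∧ (G.Adj a r → a = u₁ ∧ r = q))
    (hRE : ∀ e ∈ E.support, ∀ r ∈ R.support, e ≠ r ∧ (G.Adj e r → e = u₂ ∧ r = q))
    (hqu₁ : G.Adj q u₁) (hqu₂ : G.Adj q u₂) (hqz : q ≠ z)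
    (hN : ∀ v, v ∈ A.support ∨ v ∈ E.support ∨ v ∈ R.support → v ∈ closedNbhd G C) :
    HasSTMIn G C {x, y, z} := by
  have hqA : q ∉ A.support := fun h => (hRA q h q R.end_mem_support).1 rfl
  have hqE : q ∉ E.support := fun h => (hRE q h q R.end_mem_support).1 rfl
  refine hasSTMIn_of_claw (cons hqu₁ A.reverse) (cons hqu₂ E) R.reverse
    ((cons_isPath_iff _ _).2 ⟨hA.reverse, by simpa using hqA⟩)
    ((cons_isPath_iff _ _).2 ⟨hE, hqE⟩) hR.reverse
    (hAc.reverse.cons hqu₁ fun a ha h => ((hRA a (by simpa using ha) q R.end_mem_support).2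
      h.symm).1)
    (hEc.cons hqu₂ fun e he h => ((hRE e he q R.end_mem_support).2 h.symm).1)
    hRc.reverse (hRA x A.start_mem_support q R.end_mem_support).1.symm
    (hRE y E.end_mem_support q R.end_mem_support).1.symm hqz ?_ ?_ ?_ ?_
  · intro a ha e he haq heq
    simp only [support_reverse, List.mem_reverse, support_cons, List.mem_cons] at ha he
    exact hAE a (ha.resolve_left haq) e (he.resolve_left heq)
  · intro a ha r hr haq hrq
    simp only [support_reverse, List.mem_reverse, support_cons, List.mem_cons] at ha hr
    have ha := ha.resolve_left haq
    exact ⟨(hRA a ha r hr).1, fun h => hrq ((hRA a ha r hr).2 h).2⟩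
  · intro e he r hr heq hrq
    simp only [support_reverse, List.mem_reverse, support_cons, List.mem_cons] at he hr
    have he := he.resolve_left heq
    exact ⟨(hRE e he r hr).1, fun h => hrq ((hRE e he r hr).2 h).2⟩
  · intro v hv
    simp only [support_reverse, List.mem_reverse, support_cons, List.mem_cons] at hv
    rcases hv with (rfl | hv) | (rfl | hv) | hv
    exacts [hN v (Or.inr (Or.inr R.end_mem_support)), hN v (Or.inl hv),
      hN v (Or.inr (Or.inr R.end_mem_support)), hN v (Or.inr (Or.inl hv)),
      hN v (Or.inr (Or.inr hv))]

/-- With `u₁`, `u₂` the first and last neighbours of `q` on `Y`, this is an `S` centred at `u₁` if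
`u₁ = u₂`, an `M` if `R` is trivial, a `T` on the triangle `q u₁ u₂` if `u₁ u₂` is an edge, and
an `S` centred at `q` otherwise. -/
theorem hasSTMIn_of_path_of_leg {x y z q : V} (Y : G.Walk x y) (R : G.Walk z q)
    (hY : Y.IsPath) (hYc : Y.IsChordless) (hR : R.IsPath) (hRc : R.IsChordless)
    (hRY : ∀ v ∈ R.support, ∀ w ∈ Y.support, v ≠ w ∧ (G.Adj v w → v = q))
    (hqx : ¬ G.Adj q x) (hqy : ¬ G.Adj q y) (hq : ∃ w ∈ Y.support, G.Adj q w)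
    (hN : ∀ v, v ∈ Y.support ∨ v ∈ R.support → v ∈ closedNbhd G C) :
    HasSTMIn G C {x, y, z} := by
  obtain ⟨u₁, u₂, A, M, E, rfl, hu₁, hu₂, hA, hE⟩ :=
    Y.exists_eq_append_append_of_first_last (G.Adj q) hq
  have hAY : ∀ v ∈ A.support, v ∈ (A.append (M.append E)).support := by simp +contextual
  have hEY : ∀ v ∈ E.support, v ∈ (A.append (M.append E)).support := by simp +contextual
  have hMY : ∀ v ∈ M.support, v ∈ (A.append (M.append E)).support := by simp +contextual
  have hAp : A.IsPath := hY.of_append_left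
  have hEp : E.IsPath := hY.of_append_right.of_append_right
  have hAc : A.IsChordless := hYc.of_append_left hY
  have hEc : E.IsChordless := (hYc.of_append_right hY).of_append_right hY.of_append_right
  have hRA : ∀ a ∈ A.support, ∀ r ∈ R.support, a ≠ r ∧ (G.Adj a r → a = u₁ ∧ r = q) :=
    fun a ha r hr => ⟨fun h => (hRY r hr a (hAY a ha)).1 h.symm, fun h =>
      have hr := (hRY r hr a (hAY a ha)).2 h.symm
      ⟨hA a ha (hr ▸ h.symm), hr⟩⟩
  have hRE : ∀ e ∈ E.support, ∀ r ∈ R.support, e ≠ r ∧ (G.Adj e r → e = u₂ ∧ r = q) :=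
    fun e he r hr => ⟨fun h => (hRY r hr e (hEY e he)).1 h.symm, fun h =>
      have hr := (hRY r hr e (hEY e he)).2 h.symm
      ⟨hE e he (hr ▸ h.symm), hr⟩⟩
  have hN' : ∀ v, v ∈ A.support ∨ v ∈ E.support ∨ v ∈ R.support → v ∈ closedNbhd G C :=
    fun v hv => hN v (by rcases hv with hv | hv | hv <;> simp [hv])
  by_cases h₁₂ : u₁ = u₂
  · subst h₁₂
    refine hasSTMIn_of_leg_at_vertex A E R hAp hEp hR hAc hEc hRc (fun a ha e he hau heu => ?_)
      hRA hRE hu₁ (fun h => hqx (h ▸ hu₁)) (fun h => hqy (h ▸ hu₁)) hN'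
    have he' : e ∈ (M.append E).support := by simp [he]
    exact ⟨fun hae => hau (hY.eq_of_mem_of_mem_append ha (hae ▸ he')),
      fun hae => (hYc.eq_of_adj_append hY ha he' hae).elim hau heu⟩
  by_cases hzq : z = q
  · subst hzq
    exact hasSTMIn_of_center _ hY hYc (fun h => (hRY z R.start_mem_support z h).1 rfl) hqx hqy
      ⟨u₁, hMY _ M.start_mem_support, u₂, hMY _ M.end_mem_support, h₁₂, hu₁, hu₂⟩
      fun v hv => hN v (by rcases hv with hv | rfl; exacts [Or.inl hv, Or.inr R.start_mem_support])
  by_cases hadj : G.Adj u₁ u₂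
  · refine hasSTMIn_of_triangle A.reverse E R.reverse hAp.reverse hEp hR.reverse hAc.reverse
      hEc hRc.reverse (fun h => hqx (h ▸ hu₁)) (fun h => hqy (h ▸ hu₂)) (Ne.symm hzq) hadj
      hu₁.symm hu₂.symm ?_ ?_ (fun e he r hr => hRE e he r (by simpa using hr))
      (by simpa using hN')
    · intro a ha e he
      rw [support_reverse, List.mem_reverse] at ha
      exact hYc.adj_append_append hY h₁₂ ha he
    · intro a ha r hr
      simp only [support_reverse, List.mem_reverse] at ha hr
      exact hRA a ha r hr
  · refine hasSTMIn_of_leg_at_attachment A E R hAp hEp hR hAc hEc hRc (fun a ha e he => ?_) hRA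
      hRE hu₁ hu₂ (Ne.symm hzq) hN'
    obtain ⟨hae, hae'⟩ := hYc.adj_append_append hY h₁₂ ha he
    exact ⟨hae, fun h => hadj ((hae' h).1 ▸ (hae' h).2 ▸ h)⟩

lemma hasSTMIn_of_apex {x y z : V} (Y : G.Walk x y) (hY : Y.IsPath) (hYc : Y.IsChordless)
    (hzY : z ∉ Y.support) (hzx : ¬ G.Adj z x) (hzy : ¬ G.Adj z y)
    (hz : ∃ w ∈ Y.support, G.Adj z w) (hN : ∀ v ∈ Y.support, v ∈ closedNbhd G C)
    (hzN : z ∈ closedNbhd G C) : HasSTMIn G C {x, y, z} :=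
  hasSTMIn_of_path_of_leg Y (nil : G.Walk z z) hY hYc (by simp) isChordless_nil
    (fun v hv w hw => by
      rw [support_nil, List.mem_singleton] at hv
      exact ⟨fun h => hzY (hv ▸ h ▸ hw), fun _ => hv⟩)
    hzx hzy hz fun v hv => hv.elim (hN v) fun h => by
      rw [support_nil, List.mem_singleton] at h
      exact h ▸ hzN

lemma hasSTMIn_of_apex_on_prefix {a₃ z b b' : V} (R : G.Walk a₃ z) (hR : R.IsPath)
    (hRc : R.IsChordless) (hbz : G.Adj z b) (hfirst : ∀ v ∈ R.support, G.Adj v b → v = z)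
    (hbR : b ∉ R.support) (hb'R : b' ∉ R.support) (hbb' : b ≠ b') (hb'b : ¬ G.Adj b' b)
    (hb'a₃ : ¬ G.Adj b' a₃) (hb' : ∃ v ∈ R.support, G.Adj b' v)
    (hN : ∀ v ∈ R.support, v ∈ closedNbhd G C) (hbN : b ∈ closedNbhd G C)
    (hb'N : b' ∈ closedNbhd G C) : HasSTMIn G C {a₃, b, b'} := by
  refine hasSTMIn_of_apex (R.concat hbz) (hR.concat hbR hbz) (hRc.concat hbz hfirst) ?_
    hb'a₃ hb'b ?_ ?_ hb'N
  · simpa [support_concat] using ⟨hb'R, hbb'.symm⟩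
  · obtain ⟨v, hv, hb'v⟩ := hb'
    exact ⟨v, by simp [support_concat, hv], hb'v⟩
  · intro v hv
    simp only [support_concat, List.mem_append, List.mem_singleton] at hv
    rcases hv with hv | rfl
    exacts [hN v hv, hbN]

/-- Of the initial segments of `R` ending at the first neighbours of `a₁` and `a₂`, one contains
the other; extended to its `aᵢ`, the longer one has the other `aⱼ` as an apex. -/
lemma hasSTMIn_of_both_see_leg {a₁ a₂ a₃ q : V} (R : G.Walk a₃ q) (hR : R.IsPath)
    (hRc : R.IsChordless) (ha₁R : a₁ ∉ R.support) (ha₂R : a₂ ∉ R.support) (hne : a₁ ≠ a₂)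
    (hind12 : ¬ G.Adj a₁ a₂) (hind13 : ¬ G.Adj a₁ a₃) (hind23 : ¬ G.Adj a₂ a₃)
    (h₁ : ∃ v ∈ R.support, G.Adj a₁ v) (h₂ : ∃ v ∈ R.support, G.Adj a₂ v)
    (hN : ∀ v ∈ R.support, v ∈ closedNbhd G C) (ha₁N : a₁ ∈ closedNbhd G C)
    (ha₂N : a₂ ∈ closedNbhd G C) : HasSTMIn G C {a₁, a₂, a₃} := by
  obtain ⟨z₁, R₁, R₁', hR₁, hz₁, hf₁⟩ :=
    R.exists_eq_append_of_first (G.Adj · a₁) (by simpa [adj_comm] using h₁)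
  obtain ⟨z₂, R₂, R₂', hR₂, hz₂, hf₂⟩ :=
    R.exists_eq_append_of_first (G.Adj · a₂) (by simpa [adj_comm] using h₂)
  have hpre₁ : R₁.support <+: R.support := by
    rw [hR₁, support_append]
    exact List.prefix_append _ _
  have hpre₂ : R₂.support <+: R.support := by
    rw [hR₂, support_append]
    exact List.prefix_append _ _
  have hp₁ : (R₁.append R₁').IsPath := hR₁ ▸ hR
  have hp₂ : (R₂.append R₂').IsPath := hR₂ ▸ hR
  have hc₁ : (R₁.append R₁').IsChordless := hR₁ ▸ hRc
  have hc₂ : (R₂.append R₂').IsChordless := hR₂ ▸ hRc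
  rcases List.prefix_or_prefix_of_prefix hpre₂ hpre₁ with h | h
  · have := hasSTMIn_of_apex_on_prefix R₁ hp₁.of_append_left (hc₁.of_append_left hp₁) hz₁ hf₁
      (fun h => ha₁R (hpre₁.subset h)) (fun h => ha₂R (hpre₁.subset h)) hne
      (fun h => hind12 h.symm) hind23 ⟨z₂, h.subset R₂.end_mem_support, hz₂.symm⟩
      (fun v hv => hN v (hpre₁.subset hv)) ha₁N ha₂N
    rwa [Set.insert_comm, Set.pair_comm] at this
  · have := hasSTMIn_of_apex_on_prefix R₂ hp₂.of_append_left (hc₂.of_append_left hp₂) hz₂ hf₂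
      (fun h => ha₂R (hpre₂.subset h)) (fun h => ha₁R (hpre₂.subset h)) hne.symm
      hind12 hind13 ⟨z₁, h.subset R₁.end_mem_support, hz₁.symm⟩
      (fun v hv => hN v (hpre₂.subset hv)) ha₂N ha₁N
    rwa [Set.insert_comm, Set.pair_comm, Set.insert_comm] at this

/-- `a₂` is an apex over `a₃ - R - q - u - P - a₁`, where `u` is the first neighbour of `q` on
`P`. -/
lemma hasSTMIn_of_one_sees_leg {a₁ a₂ a₃ q : V} (P : G.Walk a₁ a₂) (R : G.Walk a₃ q)
    (hP : P.IsPath) (hPc : P.IsChordless) (hR : R.IsPath) (hRc : R.IsChordless)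
    (hRP : ∀ v ∈ R.support, v ∉ P.support)
    (hRint : ∀ v ∈ R.support, ∀ w ∈ P.support, w ≠ a₁ → w ≠ a₂ → G.Adj v w → v = q)
    (hq : ∃ w ∈ P.support, w ≠ a₂ ∧ G.Adj q w) (h₁ : ∀ v ∈ R.support, ¬ G.Adj a₁ v)
    (h₂ : ∃ v ∈ R.support, G.Adj a₂ v) (hind12 : ¬ G.Adj a₁ a₂) (hind23 : ¬ G.Adj a₂ a₃)
    (hN : ∀ v, v ∈ P.support ∨ v ∈ R.support → v ∈ closedNbhd G C) :
    HasSTMIn G C {a₁, a₂, a₃} := by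
  rw [Set.pair_comm, Set.insert_comm]
  obtain ⟨w, hw, hwa₂, hqw⟩ := hq
  obtain ⟨u, A, B, rfl, hqu, hA⟩ := P.exists_eq_append_of_first (G.Adj q) ⟨w, hw, hqw⟩
  have hAP : ∀ v ∈ A.support, v ∈ (A.append B).support := by simp +contextual
  have hqR := R.end_mem_support
  have hua₂ : u ≠ a₂ := by
    rintro rfl
    rw [mem_support_append_iff, nil_iff_support_eq.1 (isPath_iff_nil.1 hP.of_append_right),
      List.mem_singleton] at hw
    exact hwa₂ (hw.elim (fun h => (hA w h hqw).trans rfl) id)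
  have ha₂A : a₂ ∉ A.support := fun h => hua₂ (hP.eq_of_mem_of_mem_append h B.end_mem_support).symm
  have hqA : q ∉ A.support := fun h => hRP q hqR (hAP q h)
  have hY : (R.append (cons hqu A.reverse)).IsPath := by
    refine hR.append ((cons_isPath_iff _ _).2 ⟨hP.of_append_left.reverse, by simpa⟩) ?_
    intro v hv hv'
    simp only [support_cons, support_reverse, List.mem_cons, List.mem_reverse] at hv'
    exact hv'.resolve_right fun h => hRP v hv (hAP v h)
  have hYc : (R.append (cons hqu A.reverse)).IsChordless := by
    refine hRc.append ((hPc.of_append_left hP).reverse.cons hqu (by simpa using hA)) ?_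
    intro v hv x hx hvx
    simp only [support_cons, support_reverse, List.mem_cons, List.mem_reverse] at hx
    rcases hx with rfl | hx
    · exact Or.inr rfl
    refine Or.inl (hRint v hv x (hAP x hx) ?_ ?_ hvx)
    · rintro rfl
      exact h₁ v hv hvx.symm
    · rintro rfl
      exact ha₂A hx
  refine hasSTMIn_of_apex _ hY hYc ?_ hind23 (fun h => hind12 h.symm) ?_ ?_
    (hN a₂ (Or.inl (by simp)))
  · simp only [mem_support_append_iff, support_cons, support_reverse, List.mem_cons,
      List.mem_reverse, not_or]
    exact ⟨fun h => hRP a₂ h (by simp), fun h => hRP a₂ (h ▸ hqR) (by simp), ha₂A⟩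
  · obtain ⟨v, hv, h⟩ := h₂
    exact ⟨v, by simp [hv], h⟩
  · intro v hv
    simp only [mem_support_append_iff, support_cons, support_reverse, List.mem_cons,
      List.mem_reverse] at hv
    rcases hv with hv | rfl | hv
    exacts [hN v (Or.inr hv), hN v (Or.inr hqR), hN v (Or.inl (hAP v hv))]

lemma hasSTMIn_of_leg_to_interior {a₁ a₂ a₃ q : V} (P : G.Walk a₁ a₂) (R : G.Walk a₃ q)
    (hP : P.IsPath) (hPc : P.IsChordless) (hR : R.IsPath) (hRc : R.IsChordless)
    (hRP : ∀ v ∈ R.support, v ∉ P.support)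
    (hRint : ∀ v ∈ R.support, ∀ w ∈ P.support, w ≠ a₁ → w ≠ a₂ → G.Adj v w → v = q)
    (hq : ∃ w ∈ P.support, w ≠ a₁ ∧ w ≠ a₂ ∧ G.Adj q w) (hne : a₁ ≠ a₂)
    (hind12 : ¬ G.Adj a₁ a₂) (hind13 : ¬ G.Adj a₁ a₃) (hind23 : ¬ G.Adj a₂ a₃)
    (hN : ∀ v, v ∈ P.support ∨ v ∈ R.support → v ∈ closedNbhd G C) :
    HasSTMIn G C {a₁, a₂, a₃} := by
  have ha₁R : a₁ ∉ R.support := fun h => hRP a₁ h P.start_mem_support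
  have ha₂R : a₂ ∉ R.support := fun h => hRP a₂ h P.end_mem_support
  obtain ⟨w, hw, hwa₁, hwa₂, hqw⟩ := hq
  by_cases h₁ : ∃ v ∈ R.support, G.Adj a₁ v <;> by_cases h₂ : ∃ v ∈ R.support, G.Adj a₂ v
  · exact hasSTMIn_of_both_see_leg R hR hRc ha₁R ha₂R hne hind12 hind13 hind23 h₁ h₂
      (fun v hv => hN v (Or.inr hv)) (hN a₁ (Or.inl P.start_mem_support))
      (hN a₂ (Or.inl P.end_mem_support))
  · push Not at h₂
    have := hasSTMIn_of_one_sees_leg P.reverse R hP.reverse hPc.reverse hR hRc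
      (by simpa using hRP) (by simpa using fun v hv w hw h₁ h₂ => hRint v hv w hw h₂ h₁)
      ⟨w, by simpa using hw, hwa₁, hqw⟩ h₂ h₁ (fun h => hind12 h.symm) hind13
      (by simpa using hN)
    rwa [Set.insert_comm] at this
  · push Not at h₁
    exact hasSTMIn_of_one_sees_leg P R hP hPc hR hRc hRP hRint ⟨w, hw, hwa₂, hqw⟩ h₁ h₂
      hind12 hind23 hN
  · push Not at h₁ h₂
    refine hasSTMIn_of_path_of_leg P R hP hPc hR hRc (fun v hv x hx => ⟨?_, fun hvx => ?_⟩)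
      (fun h => h₁ q R.end_mem_support h.symm) (fun h => h₂ q R.end_mem_support h.symm)
      ⟨w, hw, hqw⟩ hN
    · rintro rfl
      exact hRP v hv hx
    · refine hRint v hv x hx ?_ ?_ hvx
      · rintro rfl
        exact h₁ v hv hvx.symm
      · rintro rfl
        exact h₂ v hv hvx.symm

lemma exists_walk_of_connected_induce (hC : (G.induce C).Connected) {u v : V} (hu : u ∈ C)
    (hv : v ∈ C) : ∃ p : G.Walk u v, ∀ x ∈ p.support, x ∈ C := by
  obtain ⟨w⟩ := hC.preconnected ⟨u, hu⟩ ⟨v, hv⟩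
  have hsupp : ∀ x ∈ (w.map (Embedding.induce C).toHom).support, x ∈ C := by
    intro x hx
    rw [Walk.support_map (Embedding.induce C).toHom w, List.mem_map] at hx
    obtain ⟨y, -, rfl⟩ := hx
    exact y.2
  exact ⟨_, hsupp⟩

lemma exists_isChordless_path_through (hC : (G.induce C).Connected) {a b : V}
    (ha : ∃ u ∈ C, G.Adj a u) (hb : ∃ u ∈ C, G.Adj b u) :
    ∃ P : G.Walk a b, P.IsPath ∧ P.IsChordless ∧ ∀ v ∈ P.support, v = a ∨ v = b ∨ v ∈ C := by
  obtain ⟨u, hu, hau⟩ := ha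
  obtain ⟨w, hw, hbw⟩ := hb
  obtain ⟨p, hp⟩ := exists_walk_of_connected_induce hC hu hw
  obtain ⟨_, rfl, P, hPS, hP, hPc, -⟩ :=
    exists_isPath_isChordless_to_set (S := {v | v = a ∨ v = b ∨ v ∈ C}) (A := {b})
      ⟨b, rfl, cons hau (p.concat hbw.symm), fun v hv => by
        simp only [support_cons, support_concat, List.mem_cons, List.mem_append,
          List.not_mem_nil, or_false] at hv
        rcases hv with rfl | hv | rfl
        exacts [Or.inl rfl, Or.inr (Or.inr (hp v hv)), Or.inr (Or.inl rfl)]⟩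
  exact ⟨P, hP, hPc, hPS⟩

lemma exists_leg_to_interior (hC : (G.induce C).Connected) {a₁ a₂ a₃ : V} (P : G.Walk a₁ a₂)
    (hPC : ∀ v ∈ P.support, v = a₁ ∨ v = a₂ ∨ v ∈ C) (hne : a₁ ≠ a₂) (hind12 : ¬ G.Adj a₁ a₂)
    (ha₁C : a₁ ∉ C) (ha₂C : a₂ ∉ C) (ha₃P : a₃ ∉ P.support)
    (h₃P : ∀ w ∈ P.support, ¬ G.Adj a₃ w) (h₃ : ∃ u ∈ C, G.Adj a₃ u) :
    ∃ (q : V) (R : G.Walk a₃ q), R.IsPath ∧ R.IsChordless ∧ (∀ v ∈ R.support, v = a₃ ∨ v ∈ C) ∧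
      (∀ v ∈ R.support, v ∉ P.support) ∧ (∃ w ∈ P.support, w ≠ a₁ ∧ w ≠ a₂ ∧ G.Adj q w) ∧
      ∀ v ∈ R.support, ∀ w ∈ P.support, w ≠ a₁ → w ≠ a₂ → G.Adj v w → v = q := by
  have hsnd : P.snd ∈ P.support := P.getVert_mem_support 1
  have hsndC : P.snd ∈ C := by
    have hadj := P.adj_snd (not_nil_of_ne hne)
    rcases hPC _ hsnd with h | h | h
    exacts [absurd h hadj.ne.symm, absurd (h ▸ hadj) hind12, h]
  obtain ⟨c, hc, ha₃c⟩ := h₃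
  obtain ⟨W, hW⟩ := exists_walk_of_connected_induce hC hc hsndC
  have hWC : ∀ v ∈ (cons ha₃c W).support, v = a₃ ∨ v ∈ C := by
    simp only [support_cons, List.mem_cons]
    exact fun v hv => hv.imp_right (hW v)
  obtain ⟨x, y, Q, hxy, hyP, hyW, hQ⟩ :=
    (cons ha₃c W).exists_walk_to_adj_of_not_mem {v | v ∈ P.support} ha₃P hsnd
  have hyC : y ∈ C := (hWC y hyW).resolve_left fun h => ha₃P (h ▸ hyP)
  have hxQ := hQ x Q.end_mem_support
  have hxC : x ∈ C := (hWC x hxQ.1).resolve_left (by rintro rfl; exact h₃P y hyP hxy)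
  obtain ⟨q, hq, R, hRS, hR, hRc, hRA⟩ :=
    exists_isPath_isChordless_to_set (S := {v | v = a₃ ∨ (v ∈ C ∧ v ∉ P.support)})
      (A := {v | v ∈ C ∧ v ∉ P.support ∧ ∃ w ∈ P.support, w ≠ a₁ ∧ w ≠ a₂ ∧ G.Adj v w})
      ⟨x, ⟨hxC, hxQ.2, y, hyP, fun h => ha₁C (h ▸ hyC), fun h => ha₂C (h ▸ hyC), hxy⟩, Q,
        fun v hv => (hWC v (hQ v hv).1).imp_right fun h => ⟨h, (hQ v hv).2⟩⟩
  refine ⟨q, R, hR, hRc, fun v hv => (hRS v hv).imp_right And.left, fun v hv hvP => ?_,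
    hq.2.2, fun v hv w hw hw₁ hw₂ hvw => ?_⟩
  · rcases hRS v hv with rfl | h
    exacts [ha₃P hvP, h.2 hvP]
  · rcases hRS v hv with rfl | ⟨hvC, hvP⟩
    · exact absurd hvw (h₃P w hw)
    · exact hRA v hv ⟨hvC, hvP, w, hw, hw₁, hw₂, hvw⟩

end SimpleGraph

theorem stmt0_general {V : Type u} (G : SimpleGraph V) (a₁ a₂ a₃ : V)
    (hne12 : a₁ ≠ a₂) (hne13 : a₁ ≠ a₃) (hne23 : a₂ ≠ a₃)
    (hind12 : ¬ G.Adj a₁ a₂) (hind13 : ¬ G.Adj a₁ a₃) (hind23 : ¬ G.Adj a₂ a₃)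
    (C : Set V)
    (hCI : ∀ v ∈ C, v ≠ a₁ ∧ v ≠ a₂ ∧ v ≠ a₃)
    (hCconn : (G.induce C).Connected)
    (h1 : ∃ u ∈ C, G.Adj a₁ u) (h2 : ∃ u ∈ C, G.Adj a₂ u) (h3 : ∃ u ∈ C, G.Adj a₃ u) :
    ∃ S : Set V, S ⊆ C ∪ {w | ∃ u ∈ C, G.Adj u w} ∧
      a₁ ∈ S ∧ a₂ ∈ S ∧ a₃ ∈ S ∧
      IsSTMwithExtremities (G.induce S)
        {v : S | (v : V) = a₁ ∨ (v : V) = a₂ ∨ (v : V) = a₃} := by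
  suffices h : HasSTMIn G C {a₁, a₂, a₃} by
    obtain ⟨S, hS, hIS, h⟩ := h
    exact ⟨S, hS, hIS (by simp), hIS (by simp), hIS (by simp), h⟩
  have hN : ∀ a, (∃ u ∈ C, G.Adj a u) → a ∈ closedNbhd G C :=
    fun a ⟨u, hu, h⟩ => Or.inr ⟨u, hu, h.symm⟩
  obtain ⟨P, hP, hPc, hPC⟩ := exists_isChordless_path_through hCconn h1 h2
  have hPN : ∀ v ∈ P.support, v ∈ closedNbhd G C := fun v hv => by
    rcases hPC v hv with rfl | rfl | h
    exacts [hN _ h1, hN _ h2, Or.inl h]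
  have ha₃P : a₃ ∉ P.support := fun h => by
    rcases hPC a₃ h with h | h | h
    exacts [hne13 h.symm, hne23 h.symm, (hCI a₃ h).2.2 rfl]
  by_cases h₃P : ∃ w ∈ P.support, G.Adj a₃ w
  · exact hasSTMIn_of_apex P hP hPc ha₃P (fun h => hind13 h.symm) (fun h => hind23 h.symm) h₃P
      hPN (hN _ h3)
  push Not at h₃P
  obtain ⟨q, R, hR, hRc, hRC, hRP, hq, hRint⟩ := exists_leg_to_interior hCconn P hPC hne12
    hind12 (fun h => (hCI a₁ h).1 rfl) (fun h => (hCI a₂ h).2.1 rfl) ha₃P h₃P h3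
  refine hasSTMIn_of_leg_to_interior P R hP hPc hR hRc hRP hRint hq hne12 hind12 hind13 hind23
    fun v hv => hv.elim (hPN v) fun hv => ?_
  rcases hRC v hv with rfl | h
  exacts [hN _ h3, Or.inl h]

/-- Lemma 3.1: if `I = {a₁,a₂,a₃}` is an independent set of size 3 and `C` is a
connected component of `G − I` with `I ⊆ N(C)`, then `G[N[C]]` has an induced
subgraph in `S ∪ T ∪ M` whose set of extremities is exactly `I`. -/
theorem stmt0 {V : Type u} [Fintype V] (G : SimpleGraph V) (a₁ a₂ a₃ : V)
    (hne12 : a₁ ≠ a₂) (hne13 : a₁ ≠ a₃) (hne23 : a₂ ≠ a₃)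
    (hind12 : ¬ G.Adj a₁ a₂) (hind13 : ¬ G.Adj a₁ a₃) (hind23 : ¬ G.Adj a₂ a₃)
    (C : Set V)
    (hCI : ∀ v ∈ C, v ≠ a₁ ∧ v ≠ a₂ ∧ v ≠ a₃)
    (hCconn : (G.induce C).Connected)
    (hCmax : ∀ u ∈ C, ∀ w : V, w ∉ C → w ≠ a₁ → w ≠ a₂ → w ≠ a₃ → ¬ G.Adj u w)
    (h1 : ∃ u ∈ C, G.Adj a₁ u) (h2 : ∃ u ∈ C, G.Adj a₂ u) (h3 : ∃ u ∈ C, G.Adj a₃ u) :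
    ∃ S : Set V, S ⊆ C ∪ {w | ∃ u ∈ C, G.Adj u w} ∧
      a₁ ∈ S ∧ a₂ ∈ S ∧ a₃ ∈ S ∧
      IsSTMwithExtremities (G.induce S)
        {v : S | (v : V) = a₁ ∨ (v : V) = a₂ ∨ (v : V) = a₃} :=
  stmt0_general G a₁ a₂ a₃ hne12 hne13 hne23 hind12 hind13 hind23 C hCI hCconn h1 h2 h3
end

section
/- If H is a pyramid, then H contains K_{2,3} as an induced minor. -/
open SimpleGraph

universe u v

/-! Let `a` be the apex and `b₁ b₂ b₃` the base triangle, and suppose `P₂` and `P₃` have length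
at least 2. Then `{a}` and `{b₂, b₃}` together with `P₁ - a`, `P₂ - {a, b₂}` and `P₃ - {a, b₃}`
are the branch sets of an induced `K_{2,3}`: the apex sees the second vertex of every path, the
edge `b₂ b₃` sees `b₁` and the penultimate vertices of `P₂` and `P₃`, and every other edge of the
pyramid lies inside one path or inside the base, so no further adjacencies arise. -/

namespace SimpleGraph

variable {V : Type u} {G : SimpleGraph V}

theorem hasInducedMinor_completeBipartiteGraph {α β : Type*} (X : α → Set V) (Y : β → Set V)
    (hX : ∀ i, (G.induce (X i)).Connected) (hY : ∀ j, (G.induce (Y j)).Connected)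
    (hXX : Pairwise fun i i' => Disjoint (X i) (X i') ∧ ¬ ∃ x ∈ X i, ∃ y ∈ X i', G.Adj x y)
    (hYY : Pairwise fun j j' => Disjoint (Y j) (Y j') ∧ ¬ ∃ x ∈ Y j, ∃ y ∈ Y j', G.Adj x y)
    (hXY : ∀ i j, Disjoint (X i) (Y j) ∧ ∃ x ∈ X i, ∃ y ∈ Y j, G.Adj x y) :
    HasInducedMinor (completeBipartiteGraph α β) G := by
  have adj_symm {S T : Set V} : (∃ x ∈ S, ∃ y ∈ T, G.Adj x y) → ∃ x ∈ T, ∃ y ∈ S, G.Adj x y :=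
    fun ⟨x, hx, y, hy, h⟩ => ⟨y, hy, x, hx, h.symm⟩
  refine ⟨Sum.elim X Y, fun w => ?_, fun w => ?_, fun w w' hne => ?_, fun w w' hne => ?_⟩
  · cases w
    exacts [Set.nonempty_coe_sort.mp (hX _).nonempty, Set.nonempty_coe_sort.mp (hY _).nonempty]
  · cases w
    exacts [hX _, hY _]
  · rcases w with i | j <;> rcases w' with i' | j'
    · exact (hXX (ne_of_apply_ne Sum.inl hne)).1
    · exact (hXY i j').1
    · exact (hXY i' j).1.symm
    · exact (hYY (ne_of_apply_ne Sum.inr hne)).1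
  · rcases w with i | j <;> rcases w' with i' | j' <;> simp only [Sum.elim_inl, Sum.elim_inr,
      completeBipartiteGraph_adj, Sum.isLeft_inl, Sum.isLeft_inr, Sum.isRight_inl,
      Sum.isRight_inr]
    · exact iff_of_false (hXX (ne_of_apply_ne Sum.inl hne)).2 (by simp)
    · exact iff_of_true (hXY i j').2 (by simp)
    · exact iff_of_true (adj_symm (hXY i' j).2) (by simp)
    · exact iff_of_false (hYY (ne_of_apply_ne Sum.inr hne)).2 (by simp)

theorem IsClique.connected_induce {S : Set V} (hS : G.IsClique S) (hne : S.Nonempty) :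
    (G.induce S).Connected := by
  have := hne.to_subtype
  rw [induce_eq_top.mpr hS]
  exact connected_top

namespace Walk

variable {u v : V} {p : G.Walk u v}

theorem IsPath.mem_support_tail_iff (hp : p.IsPath) (hn : ¬ p.Nil) {x : V} :
    x ∈ p.tail.support ↔ x ∈ p.support ∧ x ≠ u := by
  have hsupp := cons_support_tail hn
  have hu : u ∉ p.tail.support := (List.nodup_cons.mp (hsupp ▸ hp.support_nodup)).1
  rw [← hsupp, List.mem_cons]
  constructor
  · exact fun hx => ⟨Or.inr hx, fun h => hu (h ▸ hx)⟩
  · rintro ⟨hx | hx, hne⟩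
    exacts [absurd hx hne, hx]

theorem IsPath.connected_induce_support_diff_start (hp : p.IsPath) (hn : ¬ p.Nil) :
    (G.induce {x | x ∈ p.support ∧ x ≠ u}).Connected := by
  rw [show {x | x ∈ p.support ∧ x ≠ u} = {x | x ∈ p.tail.support} from
    Set.ext fun _ => (hp.mem_support_tail_iff hn).symm]
  exact p.tail.connected_induce_support

theorem IsPath.connected_induce_walkInterior (hp : p.IsPath) (hlen : 2 ≤ p.length) :
    (G.induce (walkInterior p)).Connected := by
  have hn : ¬ p.Nil := not_nil_iff_lt_length.mpr (by omega)
  have hn' : ¬ p.tail.reverse.Nil := by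
    rw [not_nil_iff_lt_length, length_reverse, length_tail]; omega
  have hint : walkInterior p = {x | x ∈ p.tail.reverse.support ∧ x ≠ v} := by
    ext x
    simp only [walkInterior, Set.mem_ofPred_eq, support_reverse, List.mem_reverse,
      hp.mem_support_tail_iff hn, and_assoc]
  rw [hint]
  exact hp.tail.reverse.connected_induce_support_diff_start hn'

end Walk

/-- A pyramid in `G` with its paths indexed by `Fin 3`, so that they can be handled uniformly;
`G` may have vertices off the paths. -/
structure PyramidFrame (G : SimpleGraph V) where
  apex : V
  base : Fin 3 → V
  path : ∀ i, G.Walk apex (base i)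
  isPath : ∀ i, (path i).IsPath
  one_le_length : ∀ i, 1 ≤ (path i).length
  short : Fin 3
  two_le_length : ∀ i, i ≠ short → 2 ≤ (path i).length
  eq_apex : ∀ i j, i ≠ j → ∀ x ∈ (path i).support, x ∈ (path j).support → x = apex
  adj_base : ∀ i j, i ≠ j → G.Adj (base i) (base j)
  edge_cases : ∀ x y, G.Adj x y →
    (∃ i, s(x, y) ∈ (path i).edges) ∨ ∃ i j, x = base i ∧ y = base j

namespace PyramidFrame

variable (F : PyramidFrame G)

def longBase : Set V := F.base '' {F.short}ᶜ

def arm (i : Fin 3) : Set V :=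
  {x | x ∈ (F.path i).support ∧ x ≠ F.apex ∧ x ∉ F.longBase}

theorem not_nil_path (i : Fin 3) : ¬ (F.path i).Nil :=
  Walk.not_nil_iff_lt_length.mpr (F.one_le_length i)

theorem base_ne_apex (i : Fin 3) : F.base i ≠ F.apex :=
  fun h => F.not_nil_path i ((F.isPath i).nil_iff_eq.mpr h.symm)

theorem eq_of_base_mem_support {i j : Fin 3} (h : F.base j ∈ (F.path i).support) : j = i := by
  by_contra hji
  exact F.base_ne_apex j (F.eq_apex j i hji _ (F.path j).end_mem_support h)

theorem mem_longBase_iff {i : Fin 3} {x : V} (hx : x ∈ (F.path i).support) :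
    x ∈ F.longBase ↔ x = F.base i ∧ i ≠ F.short := by
  constructor
  · rintro ⟨j, hj, rfl⟩
    obtain rfl := F.eq_of_base_mem_support hx
    exact ⟨rfl, hj⟩
  · rintro ⟨rfl, hi⟩
    exact ⟨i, hi, rfl⟩

theorem exists_eq_base_of_adj {i j : Fin 3} (hij : i ≠ j) {x y : V}
    (hx : x ∈ (F.path i).support) (hxa : x ≠ F.apex)
    (hy : y ∈ (F.path j).support) (hya : y ≠ F.apex) (hxy : G.Adj x y) :
    ∃ k l, x = F.base k ∧ y = F.base l := by
  refine (F.edge_cases x y hxy).resolve_left ?_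
  rintro ⟨k, hk⟩
  have hxk := (F.path k).fst_mem_support_of_mem_edges hk
  have hyk := (F.path k).snd_mem_support_of_mem_edges hk
  rcases eq_or_ne i k with rfl | hik
  · exact hya (F.eq_apex j i hij.symm y hy hyk)
  · exact hxa (F.eq_apex i k hik x hx hxk)

theorem not_adj_apex_base {j : Fin 3} (hj : j ≠ F.short) : ¬ G.Adj F.apex (F.base j) := by
  intro h
  rcases F.edge_cases _ _ h with ⟨k, hk⟩ | ⟨k, -, hk, -⟩
  · rcases eq_or_ne j k with rfl | hjk
    · have := (F.isPath j).length_eq_one_of_mem_edges hk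
      have := F.two_le_length j hj
      omega
    · exact F.base_ne_apex j
        (F.eq_apex j k hjk _ (F.path j).end_mem_support
          ((F.path k).snd_mem_support_of_mem_edges hk))
  · exact F.base_ne_apex k hk.symm

theorem connected_induce_longBase : (G.induce F.longBase).Connected := by
  refine IsClique.connected_induce ?_ ((Set.nonempty_compl_of_nontrivial F.short).image F.base)
  rintro _ ⟨i, -, rfl⟩ _ ⟨j, -, rfl⟩ hne
  exact F.adj_base i j fun h => hne (h ▸ rfl)

theorem connected_induce_arm (i : Fin 3) : (G.induce (F.arm i)).Connected := by
  by_cases hi : i = F.short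
  · have harm : F.arm i = {x | x ∈ (F.path i).support ∧ x ≠ F.apex} := by
      ext x
      refine and_congr_right fun hx => ?_
      simp [F.mem_longBase_iff hx, hi]
    rw [harm]
    exact (F.isPath i).connected_induce_support_diff_start (F.not_nil_path i)
  · have harm : F.arm i = walkInterior (F.path i) := by
      ext x
      refine and_congr_right fun hx => ?_
      simp [F.mem_longBase_iff hx, hi, and_comm]
    rw [harm]
    exact (F.isPath i).connected_induce_walkInterior (F.two_le_length i hi)

theorem snd_mem_arm (i : Fin 3) : (F.path i).snd ∈ F.arm i := by
  have hadj : G.Adj F.apex (F.path i).snd := (F.path i).adj_snd (F.not_nil_path i)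
  have hsupp := (F.path i).getVert_mem_support 1
  refine ⟨hsupp, hadj.ne.symm, fun hB => ?_⟩
  obtain ⟨hb, hi⟩ := (F.mem_longBase_iff hsupp).mp hB
  exact F.not_adj_apex_base hi (hb ▸ hadj)

theorem penultimate_mem_arm {i : Fin 3} (hi : i ≠ F.short) :
    (F.path i).penultimate ∈ F.arm i := by
  have hadj : G.Adj (F.path i).penultimate (F.base i) :=
    (F.path i).adj_penultimate (F.not_nil_path i)
  have hsupp := (F.path i).getVert_mem_support ((F.path i).length - 1)
  refine ⟨hsupp, fun ha => F.not_adj_apex_base hi (ha ▸ hadj), fun hB => ?_⟩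
  exact hadj.ne ((F.mem_longBase_iff hsupp).mp hB).1

theorem base_short_mem_arm : F.base F.short ∈ F.arm F.short :=
  ⟨(F.path F.short).end_mem_support, F.base_ne_apex F.short,
    fun hB => ((F.mem_longBase_iff (F.path F.short).end_mem_support).mp hB).2 rfl⟩

theorem apex_notMem_longBase : F.apex ∉ F.longBase := by
  rintro ⟨j, -, hj⟩
  exact F.base_ne_apex j hj

theorem not_adj_apex_of_mem_longBase {y : V} (hy : y ∈ F.longBase) : ¬ G.Adj F.apex y := by
  obtain ⟨j, hj, rfl⟩ := hy
  exact F.not_adj_apex_base hj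

theorem disjoint_arm {i j : Fin 3} (hij : i ≠ j) : Disjoint (F.arm i) (F.arm j) :=
  Set.disjoint_left.mpr fun x hi hj => hi.2.1 (F.eq_apex i j hij x hi.1 hj.1)

theorem not_adj_of_mem_arm {i j : Fin 3} (hij : i ≠ j) {x y : V} (hx : x ∈ F.arm i)
    (hy : y ∈ F.arm j) : ¬ G.Adj x y := by
  intro hxy
  obtain ⟨k, l, rfl, rfl⟩ := F.exists_eq_base_of_adj hij hx.1 hx.2.1 hy.1 hy.2.1 hxy
  have hk : k = F.short := by_contra fun hk => hx.2.2 ⟨k, hk, rfl⟩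
  have hl : l = F.short := by_contra fun hl => hy.2.2 ⟨l, hl, rfl⟩
  exact hxy.ne (by rw [hk, hl])

theorem exists_adj_longBase_arm (j : Fin 3) : ∃ x ∈ F.longBase, ∃ y ∈ F.arm j, G.Adj x y := by
  by_cases hj : j = F.short
  · obtain ⟨k, hk⟩ := exists_ne F.short
    subst hj
    exact ⟨F.base k, ⟨k, hk, rfl⟩, _, F.base_short_mem_arm, F.adj_base k F.short hk⟩
  · exact ⟨F.base j, ⟨j, hj, rfl⟩, _, F.penultimate_mem_arm hj,
      ((F.path j).adj_penultimate (F.not_nil_path j)).symm⟩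

end PyramidFrame

theorem PyramidFrame.hasInducedMinor_K23 (F : PyramidFrame G) : HasInducedMinor K23 G := by
  refine hasInducedMinor_completeBipartiteGraph ![{F.apex}, F.longBase] F.arm
    (fun i => ?_) F.connected_induce_arm (fun i i' hii' => ?_)
    (fun j j' hjj' => ⟨F.disjoint_arm hjj', fun ⟨x, hx, y, hy, hxy⟩ =>
      F.not_adj_of_mem_arm hjj' hx hy hxy⟩) (fun i j => ?_)
  · fin_cases i
    exacts [(isClique_singleton _).connected_induce (Set.singleton_nonempty _),
      F.connected_induce_longBase]
  · fin_cases i <;> fin_cases i'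
    · exact absurd rfl hii'
    · refine ⟨Set.disjoint_singleton_left.mpr F.apex_notMem_longBase, ?_⟩
      rintro ⟨x, rfl, y, hy, hxy⟩
      exact F.not_adj_apex_of_mem_longBase hy hxy
    · refine ⟨Set.disjoint_singleton_right.mpr F.apex_notMem_longBase, ?_⟩
      rintro ⟨x, hx, y, rfl, hxy⟩
      exact F.not_adj_apex_of_mem_longBase hx hxy.symm
    · exact absurd rfl hii'
  · fin_cases i
    · refine ⟨Set.disjoint_singleton_left.mpr fun h => h.2.1 rfl, F.apex, rfl, _, F.snd_mem_arm j,
        (F.path j).adj_snd (F.not_nil_path j)⟩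
    · exact ⟨Set.disjoint_left.mpr fun x hB hj => hj.2.2 hB, F.exists_adj_longBase_arm j⟩

end SimpleGraph

theorem IsPyramid.nonempty_pyramidFrame {V : Type u} {G : SimpleGraph V} (h : IsPyramid G) :
    Nonempty (SimpleGraph.PyramidFrame G) := by
  obtain ⟨a, b₁, b₂, b₃, P₁, P₂, P₃, h₁, h₂, h₃, l₁, l₂, l₃, hlong, -, i₁₂, i₁₃, i₂₃, hadj⟩ := h
  let b : Fin 3 → V := ![b₁, b₂, b₃]
  let P : ∀ i, G.Walk a (b i) := fun i => match i with
    | 0 => P₁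
    | 1 => P₂
    | 2 => P₃
  obtain ⟨s, hs⟩ : ∃ s : Fin 3, ∀ i, i ≠ s → 2 ≤ (P i).length := by
    rcases hlong with ⟨c₁, c₂⟩ | ⟨c₁, c₃⟩ | ⟨c₂, c₃⟩
    · exact ⟨2, fun i hi => by fin_cases i; exacts [c₁, c₂, absurd rfl hi]⟩
    · exact ⟨1, fun i hi => by fin_cases i; exacts [c₁, absurd rfl hi, c₃]⟩
    · exact ⟨0, fun i hi => by fin_cases i; exacts [absurd rfl hi, c₂, c₃]⟩
  refine ⟨{
    apex := a
    base := b
    path := P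
    isPath := fun i => ?_
    one_le_length := fun i => ?_
    short := s
    two_le_length := hs
    eq_apex := fun i j hij x hi hj => ?_
    adj_base := fun i j hij => ?_
    edge_cases := fun x y hxy => ?_ }⟩
  · fin_cases i; exacts [h₁, h₂, h₃]
  · fin_cases i; exacts [l₁, l₂, l₃]
  · fin_cases i <;> fin_cases j
    exacts [absurd rfl hij, i₁₂ x hi hj, i₁₃ x hi hj, i₁₂ x hj hi, absurd rfl hij,
      i₂₃ x hi hj, i₁₃ x hj hi, i₂₃ x hj hi, absurd rfl hij]
  · have h₁₂ : G.Adj b₁ b₂ := (hadj _ _).mpr (by simp)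
    have h₂₃ : G.Adj b₂ b₃ := (hadj _ _).mpr (by simp)
    have h₁₃ : G.Adj b₁ b₃ := (hadj _ _).mpr (by simp)
    fin_cases i <;> fin_cases j
    exacts [absurd rfl hij, h₁₂, h₁₃, h₁₂.symm, absurd rfl hij, h₂₃, h₁₃.symm, h₂₃.symm,
      absurd rfl hij]
  · rcases (hadj x y).mp hxy with h | h | h | h
    · exact Or.inl ⟨0, h⟩
    · exact Or.inl ⟨1, h⟩
    · exact Or.inl ⟨2, h⟩
    · simp only [Set.mem_insert_iff, Set.mem_singleton_iff, Sym2.eq_iff] at h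
      refine Or.inr ?_
      rcases h with (⟨hx, hy⟩ | ⟨hx, hy⟩) | (⟨hx, hy⟩ | ⟨hx, hy⟩) | (⟨hx, hy⟩ | ⟨hx, hy⟩)
      exacts [⟨0, 1, hx, hy⟩, ⟨1, 0, hx, hy⟩, ⟨1, 2, hx, hy⟩, ⟨2, 1, hx, hy⟩,
        ⟨0, 2, hx, hy⟩, ⟨2, 0, hx, hy⟩]

/-- A pyramid contains `K_{2,3}` as an induced minor. -/
theorem stmt3 {V : Type u} (H : SimpleGraph V) (h : IsPyramid H) :
    HasInducedMinor K23 H := by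
  obtain ⟨F⟩ := h.nonempty_pyramidFrame
  exact F.hasInducedMinor_K23
end

section
/- Let G contain K_{2,3} as an induced minor, with vertices of K_{2,3} denoted u, v (one side) and a, b, c (other side). Let {X_u, X_v, X_a, X_b, X_c} be an induced minor model of K_{2,3} in G minimizing the total number of vertices |X_u ∪ X_v ∪ X_a ∪ X_b ∪ X_c|, and subject to that minimizing |X_a ∪ X_b ∪ X_c|. Then each of X_a, X_b, and X_c consists of a single vertex. -/
open SimpleGraph

universe u v

/-!
Suppose `X_a` has at least two vertices. Pick `z ∈ X_a` such that `B = X_a \ {z}` is still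
connected (a non-cut vertex). If `B` sees both `X_u` and `X_v`, replacing `X_a` by `B` gives a
smaller model; if it sees neither, then `{z}` sees both and replacing `X_a` by `{z}` gives a smaller
model. If `B` sees `X_u` but not `X_v`, then `z` sees `X_v`, and moving `B` into `X_u` keeps the
total size while shrinking `X_a ∪ X_b ∪ X_c`.
-/

open Function Set

namespace SimpleGraph

variable {V : Type*} {G : SimpleGraph V}

def Touches (G : SimpleGraph V) (s t : Set V) : Prop := ∃ x ∈ s, ∃ y ∈ t, G.Adj x y

theorem touches_comm {s t : Set V} : G.Touches s t ↔ G.Touches t s :=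
  ⟨fun ⟨x, hx, y, hy, h⟩ => ⟨y, hy, x, hx, h.symm⟩, fun ⟨x, hx, y, hy, h⟩ => ⟨y, hy, x, hx, h.symm⟩⟩

theorem Touches.mono {s s' t t' : Set V} (hs : s ⊆ s') (ht : t ⊆ t') :
    G.Touches s t → G.Touches s' t' :=
  fun ⟨x, hx, y, hy, h⟩ => ⟨x, hs hx, y, ht hy, h⟩

theorem touches_union_left {s s' t : Set V} :
    G.Touches (s ∪ s') t ↔ G.Touches s t ∨ G.Touches s' t := by
  simp only [Touches, mem_union, or_and_right, exists_or]

theorem touches_iff_singleton_or_diff_singleton {s t : Set V} {z : V} (hz : z ∈ s) :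
    G.Touches s t ↔ G.Touches {z} t ∨ G.Touches (s \ {z}) t := by
  rw [← touches_union_left, union_sdiff_cancel (singleton_subset_iff.2 hz)]

theorem connected_induce_singleton (z : V) : (G.induce {z}).Connected :=
  ⟨Preconnected.of_subsingleton⟩

theorem exists_connected_induce_diff_singleton {s : Set V} (hs : s.Finite)
    (hconn : (G.induce s).Connected) (hnt : s.Nontrivial) :
    ∃ z ∈ s, (G.induce (s \ {z})).Connected := by
  have := hs.to_subtype
  have := hnt.coe_sort
  obtain ⟨z, hz⟩ := hconn.exists_connected_induce_compl_singleton_of_finite_nontrivial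
  refine ⟨z, z.2, hz.map ⟨fun x => ⟨x.1.1, x.1.2, fun h => x.2 (Subtype.ext h)⟩, id⟩ ?_⟩
  rintro ⟨x, hxs, hxz⟩
  exact ⟨⟨⟨x, hxs⟩, fun h => hxz (congrArg Subtype.val h)⟩, rfl⟩

theorem touches_singleton_diff_singleton {s : Set V} (hconn : (G.induce s).Connected) {z : V}
    (hz : z ∈ s) (hne : (s \ {z}).Nonempty) : G.Touches {z} (s \ {z}) := by
  obtain ⟨y, hys, hyz⟩ := hne
  obtain ⟨p⟩ := hconn ⟨z, hz⟩ ⟨y, hys⟩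
  cases p with
  | nil => exact absurd rfl hyz
  | cons h _ => exact ⟨z, rfl, _, ⟨Subtype.prop _, fun h' => h.ne (Subtype.ext h'.symm)⟩, h⟩

end SimpleGraph

section Update

variable {ι α : Type*} [DecidableEq ι] {R : ι → ι → α → α → Prop} {f : ι → α}

theorem Pairwise.update (hR : ∀ i j a b, R i j a b → R j i b a)
    (hf : Pairwise fun i j => R i j (f i) (f j)) {i : ι} {a : α}
    (ha : ∀ k, k ≠ i → R i k a (f k)) :
    Pairwise fun k l => R k l (Function.update f i a k) (Function.update f i a l) := by
  intro k l hkl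
  simp only [update_apply]
  split_ifs with hk hl hl <;> subst_vars
  exacts [absurd rfl hkl, ha l hl, hR _ _ _ _ (ha k hk), hf hkl]

theorem Pairwise.update_update (hR : ∀ i j a b, R i j a b → R j i b a)
    (hf : Pairwise fun i j => R i j (f i) (f j)) {i j : ι} {a b : α}
    (hab : R i j a b) (ha : ∀ k, k ≠ i → k ≠ j → R i k a (f k))
    (hb : ∀ k, k ≠ i → k ≠ j → R j k b (f k)) :
    Pairwise fun k l => R k l (Function.update (Function.update f i a) j b k)
      (Function.update (Function.update f i a) j b l) := by
  intro k l hkl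
  simp only [update_apply]
  split_ifs <;> subst_vars <;> first
    | exact absurd rfl hkl | exact hab | exact hR _ _ _ _ hab
    | exact ha _ ‹_› ‹_› | exact hR _ _ _ _ (ha _ ‹_› ‹_›)
    | exact hb _ ‹_› ‹_› | exact hR _ _ _ _ (hb _ ‹_› ‹_›) | exact hf hkl

theorem Set.ncard_iUnion_update_lt [Finite α] {X : ι → Set α} (hX : Pairwise (Disjoint on X))
    {i : ι} {C : Set α} (hC : C ⊂ X i) : (⋃ k, update X i C k).ncard < (⋃ k, X k).ncard := by
  refine ncard_lt_ncard ?_ (toFinite _)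
  obtain ⟨x, hxX, hxC⟩ := exists_of_ssubset hC
  refine (ssubset_iff_of_subset (iUnion_mono (update_le_iff.2 ⟨hC.subset, fun _ _ => le_rfl⟩))).2
    ⟨x, mem_iUnion_of_mem i hxX, ?_⟩
  simp only [mem_iUnion, not_exists, update_apply]
  intro k hk
  split_ifs at hk with hki
  exacts [hxC hk, disjoint_left.mp (hX hki) hk hxX]

end Update

section InducedMinorModel

variable {V W : Type*} {G : SimpleGraph V} {H : SimpleGraph W} {X : W → Set V}

def IsBranchPair (H : SimpleGraph W) (G : SimpleGraph V) (w w' : W) (s t : Set V) : Prop :=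
  Disjoint s t ∧ (G.Touches s t ↔ H.Adj w w')

theorem IsBranchPair.symm {w w' : W} {s t : Set V} (h : IsBranchPair H G w w' s t) :
    IsBranchPair H G w' w t s :=
  ⟨h.1.symm, touches_comm.trans (h.2.trans (H.adj_comm _ _))⟩

theorem inducedMinorModel_iff : InducedMinorModel H G X ↔
    (∀ w, (X w).Nonempty) ∧ (∀ w, (G.induce (X w)).Connected) ∧
      Pairwise fun w w' => IsBranchPair H G w w' (X w) (X w') := by
  constructor
  · rintro ⟨hne, hconn, hdisj, hadj⟩
    exact ⟨hne, hconn, fun _ _ h => ⟨hdisj h, hadj h⟩⟩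
  · rintro ⟨hne, hconn, hpair⟩
    exact ⟨hne, hconn, fun _ _ h => (hpair h).1, fun _ _ h => (hpair h).2⟩

theorem InducedMinorModel.touches_iff (hX : InducedMinorModel H G X) {w w' : W} (h : w ≠ w') :
    G.Touches (X w) (X w') ↔ H.Adj w w' :=
  hX.2.2.2 h

theorem InducedMinorModel.update [DecidableEq W] (hX : InducedMinorModel H G X) {w : W}
    {C : Set V} (hC : C ⊆ X w) (hconn : (G.induce C).Connected)
    (htouch : ∀ w', H.Adj w w' → G.Touches C (X w')) :
    InducedMinorModel H G (Function.update X w C) := by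
  obtain ⟨hne, hconn', hpair⟩ := inducedMinorModel_iff.1 hX
  refine inducedMinorModel_iff.2 ⟨(forall_update_iff _ fun _ (s : Set V) => s.Nonempty).2
    ⟨nonempty_coe_sort.1 hconn.nonempty, fun k _ => hne k⟩,
    (forall_update_iff _ fun _ s => (G.induce s).Connected).2 ⟨hconn, fun k _ => hconn' k⟩,
    hpair.update (R := IsBranchPair H G) (fun _ _ _ _ => IsBranchPair.symm) fun k hk => ?_⟩
  exact ⟨(hpair hk.symm).1.mono_left hC,
    fun h => (hpair hk.symm).2.1 (h.mono hC subset_rfl), htouch k⟩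

theorem InducedMinorModel.update_singleton_update_union [DecidableEq W]
    (hX : InducedMinorModel H G X) {w w' : W} (hadj : H.Adj w w') {z : V} (hz : z ∈ X w)
    (hB : (G.induce (X w \ {z})).Connected) (hBw' : G.Touches (X w \ {z}) (X w'))
    (hBk : ∀ k, k ≠ w' → H.Adj w k → ¬ H.Adj w' k → ¬ G.Touches (X w \ {z}) (X k))
    (hzk : ∀ k, k ≠ w' → H.Adj w k → G.Touches {z} (X k)) :
    InducedMinorModel H G
      (Function.update (Function.update X w {z}) w' (X w' ∪ (X w \ {z}))) := by
  obtain ⟨hne, hconn, hpair⟩ := inducedMinorModel_iff.1 hX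
  have hww' : w ≠ w' := hadj.ne
  have hzw : ∀ k, k ≠ w → Disjoint {z} (X k) := fun k hk =>
    (hpair hk.symm).1.mono_left (singleton_subset_iff.2 hz)
  have hw'conn : (G.induce (X w' ∪ (X w \ {z}))).Connected := by
    obtain ⟨x, hx, y, hy, hxy⟩ := hBw'
    exact connected_induce_union (hconn w').preconnected hB.preconnected hy hx hxy.symm
  refine inducedMinorModel_iff.2 ⟨?_, ?_, hpair.update_update (R := IsBranchPair H G)
    (fun _ _ _ _ => IsBranchPair.symm) ⟨?_, ?_⟩ (fun k hk hk' => ⟨?_, ?_⟩)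
    (fun k hk hk' => ⟨?_, ?_⟩)⟩
  · exact (forall_update_iff _ fun _ (s : Set V) => s.Nonempty).2
      ⟨(hne w').mono subset_union_left, fun k _ => (forall_update_iff _ fun _ (s : Set V) =>
        s.Nonempty).2 ⟨singleton_nonempty z, fun k _ => hne k⟩ k⟩
  · exact (forall_update_iff _ fun _ s => (G.induce s).Connected).2
      ⟨hw'conn, fun k _ => (forall_update_iff _ fun _ s => (G.induce s).Connected).2
        ⟨connected_induce_singleton z, fun k _ => hconn k⟩ k⟩
  · exact disjoint_union_right.2 ⟨hzw w' hww'.symm, disjoint_singleton_left.2 fun h => h.2 rfl⟩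
  · exact iff_of_true ((touches_singleton_diff_singleton (hconn w) hz
      (nonempty_coe_sort.1 hB.nonempty)).mono subset_rfl subset_union_right) hadj
  · exact hzw k hk
  · exact ⟨fun h => (hpair hk.symm).2.1 (h.mono (singleton_subset_iff.2 hz) subset_rfl),
      hzk k hk'⟩
  · exact disjoint_union_left.2 ⟨(hpair hk'.symm).1, (hpair hk.symm).1.mono_left sdiff_subset⟩
  · refine touches_union_left.trans ⟨fun h => h.elim (hpair hk'.symm).2.1 fun hBk' => ?_,
      fun h => Or.inl ((hpair hk'.symm).2.2 h)⟩
    by_contra hn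
    exact hBk k hk' ((hpair hk.symm).2.1 (hBk'.mono sdiff_subset subset_rfl)) hn hBk'

end InducedMinorModel

theorem InducedMinorModel.exists_K23_of_touches_one_side {V : Type*} [Finite V]
    {G : SimpleGraph V} {X : Fin 2 ⊕ Fin 3 → Set V} (hX : InducedMinorModel K23 G X) {j : Fin 3}
    {z : V} (hz : z ∈ X (.inr j)) (hB : (G.induce (X (.inr j) \ {z})).Connected) {i i' : Fin 2}
    (hii' : i ≠ i') (hi : G.Touches (X (.inr j) \ {z}) (X (.inl i)))
    (hi' : ¬ G.Touches (X (.inr j) \ {z}) (X (.inl i'))) :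
    ∃ Y, InducedMinorModel K23 G Y ∧ (⋃ w, Y w) ⊆ ⋃ w, X w ∧
      (⋃ j, Y (.inr j)).ncard < (⋃ j, X (.inr j)).ncard := by
  have hother : ∀ k, (.inl k : Fin 2 ⊕ Fin 3) ≠ .inl i → k = i' := fun k hk => by
    have : k ≠ i := fun h => hk (congrArg _ h)
    omega
  refine ⟨_, hX.update_singleton_update_union (w' := .inl i) (by simp [K23]) hz hB hi ?_ ?_,
    iUnion_subset ?_, ?_⟩
  · rintro (k | k) hk - hn
    · rwa [hother k hk]
    · simp [K23] at hn
  · rintro (k | k) hk hadj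
    · rw [hother k hk]
      exact ((touches_iff_singleton_or_diff_singleton hz).1
        ((hX.touches_iff (by simp)).2 (by simp [K23]))).resolve_right hi'
    · simp [K23] at hadj
  · exact (forall_update_iff _ fun _ s => s ⊆ ⋃ w, X w).2
      ⟨union_subset (subset_iUnion X _) (sdiff_subset.trans (subset_iUnion X _)),
        fun k _ => (forall_update_iff _ fun _ s => s ⊆ ⋃ w, X w).2
          ⟨singleton_subset_iff.2 (mem_iUnion_of_mem _ hz), fun k _ => subset_iUnion X k⟩ k⟩
  · have hY : (fun j' => Function.update (Function.update X (.inr j) {z}) (.inl i)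
        (X (.inl i) ∪ X (.inr j) \ {z}) (.inr j')) =
        Function.update (fun j' => X (.inr j')) j {z} := by
      ext1 j'
      by_cases h : j' = j <;> simp [h]
    rw [hY]
    exact ncard_iUnion_update_lt (hX.2.2.1.comp_of_injective Sum.inr_injective)
      ((ssubset_iff_of_subset (singleton_subset_iff.2 hz)).2 (nonempty_coe_sort.1 hB.nonempty))

/-- `Sum.inr j` for `j : Fin 3` are the vertices `a`, `b`, `c`. -/
theorem stmt6 {V : Type u} [Fintype V] (G : SimpleGraph V)
    (X : Fin 2 ⊕ Fin 3 → Set V) (hX : InducedMinorModel K23 G X)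
    (hmin1 : ∀ Y : Fin 2 ⊕ Fin 3 → Set V, InducedMinorModel K23 G Y →
      (⋃ w, X w).ncard ≤ (⋃ w, Y w).ncard)
    (hmin2 : ∀ Y : Fin 2 ⊕ Fin 3 → Set V, InducedMinorModel K23 G Y →
      (⋃ w, Y w).ncard = (⋃ w, X w).ncard →
      (⋃ j : Fin 3, X (Sum.inr j)).ncard ≤ (⋃ j : Fin 3, Y (Sum.inr j)).ncard) :
    ∀ j : Fin 3, ∃ v : V, X (Sum.inr j) = {v} := by
  intro j
  by_contra! hj
  have hnt : (X (.inr j)).Nontrivial :=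
    (hX.1 _).exists_eq_singleton_or_nontrivial.resolve_left fun ⟨v, hv⟩ => hj v hv
  obtain ⟨z, hz, hB⟩ := exists_connected_induce_diff_singleton (toFinite _) (hX.2.1 _) hnt
  set B := X (.inr j) \ {z}
  have shrink : ∀ C ⊂ X (.inr j), (G.induce C).Connected →
      (∀ i, G.Touches C (X (.inl i))) → False := by
    intro C hC hconn htouch
    refine (hmin1 _ (hX.update hC.subset hconn ?_)).not_gt (ncard_iUnion_update_lt hX.2.2.1 hC)
    rintro (i | i) hadj
    exacts [htouch i, absurd hadj (by simp [K23])]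
  have move : ∀ i i', i ≠ i' → G.Touches B (X (.inl i)) → ¬ G.Touches B (X (.inl i')) →
      False := by
    intro i i' hii' hi hi'
    obtain ⟨Y, hY, hsub, hlt⟩ := hX.exists_K23_of_touches_one_side hz hB hii' hi hi'
    exact (hmin2 Y hY (le_antisymm (ncard_le_ncard hsub) (hmin1 Y hY))).not_gt hlt
  have hsplit : ∀ i, G.Touches {z} (X (.inl i)) ∨ G.Touches B (X (.inl i)) := fun i =>
    (touches_iff_singleton_or_diff_singleton hz).1 ((hX.touches_iff (by simp)).2 (by simp [K23]))
  by_cases h0 : G.Touches B (X (.inl 0)) <;> by_cases h1 : G.Touches B (X (.inl 1))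
  · exact shrink B ((ssubset_iff_of_subset sdiff_subset).2 ⟨z, hz, fun h => h.2 rfl⟩) hB
      (Fin.forall_fin_two.2 ⟨h0, h1⟩)
  · exact move 0 1 (by decide) h0 h1
  · exact move 1 0 (by decide) h1 h0
  · exact shrink {z} ((ssubset_iff_of_subset (singleton_subset_iff.2 hz)).2
      (nonempty_coe_sort.1 hB.nonempty)) (connected_induce_singleton z) (Fin.forall_fin_two.2
        ⟨(hsplit 0).resolve_right h0, (hsplit 1).resolve_right h1⟩)
end

section
/- For any positive integer q, a graph G does not contain the complete bipartite graph K_{2,q} as an induced minor if and only if every minimal separator of G induces a subgraph with independence number strictly less than q. -/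
open SimpleGraph

universe u v

/-! A minimal `u,v`-separator `S` is the neighbourhood of both components of `G - S` containing
`u` and `v`, so contracting these two components and keeping `q` pairwise nonadjacent vertices
of `S` yields an induced `K_{2,q}`. Conversely, in a model of `K_{2,q}` the complement of the two
branch sets of the `2`-side separates them; a minimal separator inside it still meets each of
the other `q` branch sets, and one vertex from each of them is an independent set. -/

open Function

variable {V : Type u} {G : SimpleGraph V} {S : Set V} {t u v x y : V}

lemma exists_walk_support_subset_of_connected_induce {s : Set V} (h : (G.induce s).Connected)
    (hx : x ∈ s) (hy : y ∈ s) : ∃ p : G.Walk x y, ∀ z ∈ p.support, z ∈ s := by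
  obtain ⟨p⟩ := h.preconnected ⟨x, hx⟩ ⟨y, hy⟩
  refine ⟨p.map (Embedding.induce s).toHom, fun z hz => ?_⟩
  obtain ⟨z', -, rfl⟩ := List.mem_map.1 (Walk.support_map _ p ▸ hz)
  exact z'.2

lemma connected_induce_singleton (G : SimpleGraph V) (x : V) :
    (G.induce ({x} : Set V)).Connected := by
  rw [induce_singleton_eq_top]
  exact connected_top

/-- The vertex set of the component of `G - S` containing `t` (empty if `t ∈ S`). -/
def reachSetAvoiding (G : SimpleGraph V) (S : Set V) (t : V) : Set V :=
  {x | ∃ p : G.Walk t x, ∀ z ∈ p.support, z ∉ S}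

lemma mem_reachSetAvoiding_self (ht : t ∉ S) : t ∈ reachSetAvoiding G S t :=
  ⟨Walk.nil, by simpa using ht⟩

lemma not_mem_of_mem_reachSetAvoiding (hx : x ∈ reachSetAvoiding G S t) : x ∉ S := by
  obtain ⟨p, hp⟩ := hx
  exact hp x p.end_mem_support

lemma mem_reachSetAvoiding_of_adj (hx : x ∈ reachSetAvoiding G S t) (hxy : G.Adj x y)
    (hy : y ∉ S) : y ∈ reachSetAvoiding G S t := by
  obtain ⟨p, hp⟩ := hx
  refine ⟨p.concat hxy, fun z hz => ?_⟩
  rw [Walk.support_concat, List.mem_append, List.mem_singleton] at hz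
  rcases hz with hz | rfl
  exacts [hp z hz, hy]

lemma connected_induce_reachSetAvoiding (ht : t ∉ S) :
    (G.induce (reachSetAvoiding G S t)).Connected := by
  classical
  refine induce_connected_of_patches t (mem_reachSetAvoiding_self ht) fun {x} ⟨p, hp⟩ =>
    ⟨{z | z ∈ p.support}, fun z hz => ?_, p.start_mem_support, p.end_mem_support,
      p.connected_induce_support.preconnected _ _⟩
  exact ⟨p.takeUntil z hz, fun w hw => hp w (p.support_takeUntil_subset_support hz hw)⟩

lemma Separates.symm (h : Separates G S u v) : Separates G S v u :=
  ⟨h.2.1, h.1, fun p => by simpa using h.2.2 p.reverse⟩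

lemma Separates.disjoint_reachSetAvoiding (h : Separates G S u v) :
    Disjoint (reachSetAvoiding G S u) (reachSetAvoiding G S v) := by
  refine Set.disjoint_left.2 fun x ⟨p, hp⟩ ⟨q, hq⟩ => ?_
  obtain ⟨w, hw, hwS⟩ := h.2.2 (p.append q.reverse)
  rcases List.mem_append.1 (Walk.support_append p q.reverse ▸ hw) with hw | hw
  · exact hp w hw hwS
  · exact hq w (by simpa using List.mem_of_mem_tail hw) hwS

lemma Separates.not_adj (h : Separates G S u v) (hx : x ∈ reachSetAvoiding G S u)
    (hy : y ∈ reachSetAvoiding G S v) : ¬ G.Adj x y := fun hxy =>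
  Set.disjoint_left.1 h.disjoint_reachSetAvoiding
    (mem_reachSetAvoiding_of_adj hx hxy (not_mem_of_mem_reachSetAvoiding hy)) hy

lemma Separates.separates_neighbors (h : Separates G S u v) :
    Separates G {s ∈ S | ∃ x ∈ reachSetAvoiding G S u, G.Adj x s} u v := by
  refine ⟨fun hu => h.1 hu.1, fun hv => h.2.1 hv.1, fun p => ?_⟩
  have hv : v ∉ reachSetAvoiding G S u := fun hv =>
    Set.disjoint_left.1 h.disjoint_reachSetAvoiding hv (mem_reachSetAvoiding_self h.2.1)
  obtain ⟨d, hd, hd₁, hd₂⟩ := p.exists_boundary_dart _ (mem_reachSetAvoiding_self h.1) hv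
  have hdS : d.snd ∈ S := by
    by_contra hdS
    exact hd₂ (mem_reachSetAvoiding_of_adj hd₁ d.adj hdS)
  exact ⟨d.snd, p.dart_snd_mem_support_of_mem_darts hd, hdS, d.fst, hd₁, d.adj⟩

lemma Separates.exists_adj_of_minimal (h : Separates G S u v)
    (hmin : ∀ T ⊆ S, Separates G T u v → T = S) {s : V} (hs : s ∈ S) :
    ∃ x ∈ reachSetAvoiding G S u, G.Adj x s := by
  rw [← hmin _ (Set.sep_subset _ _) h.separates_neighbors] at hs
  exact hs.2

/-- Indexed by `Fin 2` to match the `2`-side of `K_{2,ι}`. -/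
lemma IsMinimalSeparator.exists_fin_two (hS : IsMinimalSeparator G S) :
    ∃ c : Fin 2 → V, (∀ i, c i ∉ S) ∧ (∀ i j, i ≠ j → Separates G S (c i) (c j)) ∧
      ∀ i, ∀ s ∈ S, ∃ x ∈ reachSetAvoiding G S (c i), G.Adj x s := by
  obtain ⟨u, v, h, hmin⟩ := hS
  have hmin' : ∀ T ⊆ S, Separates G T v u → T = S := fun T hT hT' => hmin T hT hT'.symm
  refine ⟨![u, v], ?_, ?_, ?_⟩
  · intro i; fin_cases i
    exacts [h.1, h.2.1]
  · intro i j hij; fin_cases i <;> fin_cases j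
    all_goals first | exact absurd rfl hij | exact h | exact h.symm
  · intro i; fin_cases i
    exacts [fun s hs => h.exists_adj_of_minimal hmin hs,
      fun s hs => h.symm.exists_adj_of_minimal hmin' hs]

lemma hasInducedMinor_completeBipartiteGraph_of_isMinimalSeparator {ι : Type v}
    (hS : IsMinimalSeparator G S) (a : ι → V) (ha : Injective a) (haS : ∀ j, a j ∈ S)
    (hind : Pairwise fun j j' => ¬ G.Adj (a j) (a j')) :
    HasInducedMinor (completeBipartiteGraph (Fin 2) ι) G := by
  obtain ⟨c, hc, hsep, hnbr⟩ := hS.exists_fin_two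
  refine ⟨Sum.elim (fun i => reachSetAvoiding G S (c i)) (fun j => {a j}), ?_, ?_, ?_, ?_⟩
  · rintro (i | j)
    exacts [⟨c i, mem_reachSetAvoiding_self (hc i)⟩, Set.singleton_nonempty _]
  · rintro (i | j)
    exacts [connected_induce_reachSetAvoiding (hc i), connected_induce_singleton G _]
  · rintro (i | j) (i' | j') hne <;> simp only [Sum.elim_inl, Sum.elim_inr]
    · exact (hsep i i' fun h => hne (congrArg _ h)).disjoint_reachSetAvoiding
    · exact Set.disjoint_singleton_right.2 fun h => not_mem_of_mem_reachSetAvoiding h (haS j')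
    · exact Set.disjoint_singleton_left.2 fun h => not_mem_of_mem_reachSetAvoiding h (haS j)
    · exact Set.disjoint_singleton.2 (ha.ne fun h => hne (congrArg _ h))
  · rintro (i | j) (i' | j') hne <;>
      simp only [Sum.elim_inl, Sum.elim_inr, Set.mem_singleton_iff, exists_eq_left,
        completeBipartiteGraph_adj, Sum.isLeft_inl, Sum.isLeft_inr, Sum.isRight_inl,
        Sum.isRight_inr, Bool.false_eq_true, and_self, and_true, and_false, or_self, or_true,
        or_false, iff_true, iff_false, not_exists, not_and]
    · exact fun x hx y hy => (hsep i i' fun h => hne (congrArg _ h)).not_adj hx hy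
    · exact hnbr i _ (haS j')
    · obtain ⟨x, hx, hxa⟩ := hnbr i' _ (haS j)
      exact ⟨x, hx, hxa.symm⟩
    · exact hind fun h => hne (congrArg _ h)

lemma Separates.exists_minimal_subset [Finite V] (h : Separates G S u v) :
    ∃ T ⊆ S, Separates G T u v ∧ ∀ T' ⊆ T, Separates G T' u v → T' = T := by
  obtain ⟨T, hTS, hT⟩ := exists_minimal_le_of_wellFoundedLT (Separates G · u v) S h
  exact ⟨T, hTS, hT.prop, fun T' hT'T hT' => hT'T.antisymm (hT.le_of_le hT' hT'T)⟩

lemma separates_compl_union {A B : Set V} (hAB : Disjoint A B)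
    (hno : ∀ x ∈ A, ∀ y ∈ B, ¬ G.Adj x y) (hu : u ∈ A) (hv : v ∈ B) :
    Separates G (A ∪ B)ᶜ u v := by
  refine ⟨fun h => h (Or.inl hu), fun h => h (Or.inr hv), fun p => ?_⟩
  obtain ⟨d, hd, hd₁, hd₂⟩ := p.exists_boundary_dart A hu (Set.disjoint_right.1 hAB hv)
  refine ⟨d.snd, p.dart_snd_mem_support_of_mem_darts hd, ?_⟩
  rintro (hA | hB)
  exacts [hd₂ hA, hno _ hd₁ _ hB d.adj]

lemma exists_isMinimalSeparator_of_hasInducedMinor [Finite V] {ι : Type v}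
    (h : HasInducedMinor (completeBipartiteGraph (Fin 2) ι) G) :
    ∃ S, IsMinimalSeparator G S ∧ ∃ a : ι → V, Injective a ∧ (∀ j, a j ∈ S) ∧
      Pairwise fun j j' => ¬ G.Adj (a j) (a j') := by
  obtain ⟨X, hne, hconn, hdisj, hadj⟩ := h
  obtain ⟨u, hu⟩ := hne (.inl 0)
  obtain ⟨v, hv⟩ := hne (.inl 1)
  have hsep : Separates G (X (.inl 0) ∪ X (.inl 1))ᶜ u v :=
    separates_compl_union (hdisj (by simp))
      (fun x hx y hy hxy => by simpa using (hadj (by simp)).1 ⟨x, hx, y, hy, hxy⟩) hu hv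
  obtain ⟨T, hTS, hT, hTmin⟩ := hsep.exists_minimal_subset
  have hmeet : ∀ j, ∃ w ∈ T, w ∈ X (.inr j) := by
    intro j
    obtain ⟨x₀, hx₀, y₀, hy₀, h₀⟩ := (hadj (i := .inl 0) (j := .inr j) (by simp)).2 (by simp)
    obtain ⟨y₁, hy₁, x₁, hx₁, h₁⟩ := (hadj (i := .inr j) (j := .inl 1) (by simp)).2 (by simp)
    have hpath : (G.induce (X (.inl 0) ∪ X (.inr j) ∪ X (.inl 1))).Connected :=
      connected_induce_union (connected_induce_union (hconn _).preconnected
        (hconn _).preconnected hx₀ hy₀ h₀).preconnected (hconn _).preconnected (.inr hy₁) hx₁ h₁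
    obtain ⟨p, hp⟩ :=
      exists_walk_support_subset_of_connected_induce hpath (.inl (.inl hu)) (.inr hv)
    obtain ⟨w, hwp, hwT⟩ := hT.2.2 p
    refine ⟨w, hwT, ?_⟩
    have hw := hTS hwT
    rcases hp w hwp with (h | h) | h
    exacts [absurd (.inl h) hw, h, absurd (.inr h) hw]
  choose a haT haX using hmeet
  refine ⟨T, ⟨u, v, hT, hTmin⟩, a, fun j j' h => ?_, haT, fun j j' hne hadj' => ?_⟩
  · by_contra hne
    exact Set.disjoint_left.1 (hdisj (by simpa using hne)) (haX j) (h ▸ haX j')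
  · simpa using (hadj (by simpa using hne)).1 ⟨a j, haX j, a j', haX j', hadj'⟩

lemma Set.exists_injective_fin_of_le_ncard {A : Set V} [Finite A] {q : ℕ} (hq : q ≤ A.ncard) :
    ∃ a : Fin q → V, Injective a ∧ ∀ i, a i ∈ A := by
  rw [← Nat.card_coe_set_eq] at hq
  let e : Fin q ↪ A := (Fin.castLEEmb hq).trans (Finite.equivFin A).symm.toEmbedding
  exact ⟨fun i => e i, Subtype.val_injective.comp e.injective, fun i => (e i).2⟩

theorem stmt12_general {V : Type u} [Fintype V] (G : SimpleGraph V) (q : ℕ) :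
    ¬ HasInducedMinor (completeBipartiteGraph (Fin 2) (Fin q)) G ↔
      ∀ S : Set V, IsMinimalSeparator G S →
        ∀ A ⊆ S, _root_.IsIndepSet G A → A.ncard < q := by
  constructor
  · intro hno S hS A hAS hA
    by_contra! hqA
    obtain ⟨a, ha, haA⟩ := Set.exists_injective_fin_of_le_ncard hqA
    exact hno <| hasInducedMinor_completeBipartiteGraph_of_isMinimalSeparator hS a ha
      (fun i => hAS (haA i)) fun i j hij => hA _ (haA i) _ (haA j) (ha.ne hij)
  · intro hsmall hminor
    obtain ⟨S, hS, a, ha, haS, hind⟩ := exists_isMinimalSeparator_of_hasInducedMinor hminor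
    have hindep : _root_.IsIndepSet G (Set.range a) := by
      rintro _ ⟨i, rfl⟩ _ ⟨j, rfl⟩ hij
      exact hind fun h => hij (congrArg a h)
    have := hsmall S hS _ (Set.range_subset_iff.2 haS) hindep
    rw [Set.ncard_range_of_injective ha, Nat.card_fin] at this
    exact lt_irrefl q this

/-- For every positive integer `q`, a graph has no `K_{2,q}` induced minor iff every
minimal separator induces a subgraph with independence number less than `q`. -/
theorem stmt12 {V : Type u} [Fintype V] (G : SimpleGraph V) (q : ℕ) (hq : 0 < q) :
    ¬ HasInducedMinor (completeBipartiteGraph (Fin 2) (Fin q)) G ↔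
      ∀ S : Set V, IsMinimalSeparator G S →
        ∀ A ⊆ S, _root_.IsIndepSet G A → A.ncard < q :=
  stmt12_general G q
end
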